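/- arXiv:2108.08465 — 10 statements merged into one kernel-verified Lean document; each statement's English description precedes it below -/
import Mathlib

section
/- A preference profile P̄ on X is simultaneously a ⊵-maximal element and a ⊵-upper bound if and only if there exists a unique allocation x* ∈ X such that every individual ranks x* first under P̄, i.e., R(P̄_i, x*) = 1 for all i ∈ N. -/
/-- A preference profile: each individual `i ∈ N` has a total preorder on `X`. -/
structure PrefProfile (N X : Type*) where
  pref : N → X → X → Prop
  refl : ∀ i x, pref i x x
  trans : ∀ i x y z, pref i x y → pref i y z → pref i x z
  total : ∀ i x y, pref i x y ∨ pref i y x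

namespace PrefProfile

variable {N X : Type*}

/-- Strict part of individual `i`'s preference. -/
def strict (P : PrefProfile N X) (i : N) (x y : X) : Prop :=
  P.pref i x y ∧ ¬ P.pref i y x

/-- The ranking `R(P_i, x) = 1 + #{z : z ≻_{P_i} x}`. -/
noncomputable def rank (P : PrefProfile N X) (i : N) (x : X) : ℕ :=
  1 + {z : X | P.strict i z x}.ncard

/-- The set of Pareto efficient allocations. -/
def PE (P : PrefProfile N X) : Set X :=
  {x | ¬ ∃ z : X, (∀ i, P.pref i z x) ∧ (∃ j, P.strict j z x)}

/-- `P ⊵ P'`: there is a surjection `ψ` from `PE(P')` onto `PE(P)` weakly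
improving all ranking vectors. -/
def Dom (P P' : PrefProfile N X) : Prop :=
  ∃ ψ : X → X, Set.MapsTo ψ P'.PE P.PE ∧ Set.SurjOn ψ P'.PE P.PE ∧
    ∀ x ∈ P'.PE, ∀ i, P.rank i (ψ x) ≤ P'.rank i x

/-- `P ≜ P'`. -/
def Equiv (P P' : PrefProfile N X) : Prop := Dom P P' ∧ Dom P' P

/-- `P` is ⊵-maximal. -/
def Maximal (P : PrefProfile N X) : Prop := ∀ P' : PrefProfile N X, Dom P' P → Equiv P' P

/-- `P` is a ⊵-upper bound. -/
def UpperBound (P : PrefProfile N X) : Prop := ∀ P' : PrefProfile N X, Dom P P'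

/-- `P` is ⊵-minimal. -/
def Minimal (P : PrefProfile N X) : Prop := ∀ P' : PrefProfile N X, Dom P P' → Equiv P P'

/-- `P` is a strict preference profile. -/
def StrictProfile (P : PrefProfile N X) : Prop :=
  ∀ i, ∀ x y : X, x ≠ y → P.strict i x y ∨ P.strict i y x

end PrefProfile

namespace PrefProfile

variable {N X : Type*}

lemma one_le_rank (P : PrefProfile N X) (i : N) (x : X) : 1 ≤ P.rank i x :=
  Nat.le_add_right 1 _

lemma rank_eq_one_iff [Fintype X] (P : PrefProfile N X) (i : N) (x : X) :
    P.rank i x = 1 ↔ ∀ z, ¬ P.strict i z x := by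
  rw [rank, Nat.add_eq_left, Set.ncard_eq_zero (Set.toFinite _), Set.eq_empty_iff_forall_notMem]
  rfl

lemma top_of_rank_one [Fintype X] {P : PrefProfile N X} {i : N} {x : X}
    (h : P.rank i x = 1) (z : X) : P.pref i x z := by
  rw [rank_eq_one_iff] at h
  rcases P.total i x z with h1 | h1
  · exact h1
  · by_contra h2
    exact h z ⟨h1, h2⟩

lemma rank_le_of_pref [Fintype X] (P : PrefProfile N X) {i : N} {z x : X}
    (h : P.pref i z x) : P.rank i z ≤ P.rank i x := by
  refine Nat.add_le_add_left (Set.ncard_le_ncard ?_ (Set.toFinite _)) 1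
  intro w hw
  refine ⟨P.trans i w z x hw.1 h, fun hxw => hw.2 (P.trans i z x w h hxw)⟩

lemma rank_lt_of_strict [Fintype X] (P : PrefProfile N X) {j : N} {z x : X}
    (h : P.strict j z x) : P.rank j z < P.rank j x := by
  refine Nat.add_lt_add_left (Set.ncard_lt_ncard ?_ (Set.toFinite _)) 1
  constructor
  · intro w hw
    refine ⟨P.trans j w z x hw.1 h.1, fun hxw => hw.2 (P.trans j z x w h.1 hxw)⟩
  · intro hsub
    have : P.strict j z z := hsub h
    exact this.2 (P.refl j z)

lemma PE_nonempty [Fintype N] [Fintype X] [Nonempty X] (P : PrefProfile N X) :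
    P.PE.Nonempty := by
  obtain ⟨x, -, hx⟩ := Finset.exists_min_image Finset.univ
    (fun x => ∑ i, P.rank i x) ⟨Classical.arbitrary X, Finset.mem_univ _⟩
  refine ⟨x, fun ⟨z, hz, j, hj⟩ => ?_⟩
  have hlt : ∑ i, P.rank i z < ∑ i, P.rank i x :=
    Finset.sum_lt_sum (fun i _ => P.rank_le_of_pref (hz i))
      ⟨j, Finset.mem_univ j, P.rank_lt_of_strict hj⟩
  exact absurd (hx z (Finset.mem_univ z)) (not_le.mpr hlt)

/-- The total-indifference profile. -/
def indiff (N X : Type*) : PrefProfile N X where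
  pref _ _ _ := True
  refl _ _ := trivial
  trans _ _ _ _ _ _ := trivial
  total _ _ _ := Or.inl trivial

lemma indiff_PE : (indiff N X).PE = Set.univ := by
  ext x
  simp [PE, indiff, strict]

lemma indiff_rank [Fintype X] (i : N) (x : X) : (indiff N X).rank i x = 1 := by
  rw [rank_eq_one_iff]
  intro z hz
  exact hz.2 trivial

/-- The profile putting `a` strictly on top, everything else indifferent. -/
def topAt (N : Type*) {X : Type*} [DecidableEq X] (a : X) : PrefProfile N X where
  pref _ x y := x = a ∨ y ≠ a
  refl _ x := by by_cases h : x = a <;> simp [h]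
  trans _ x y z hxy hyz := by
    rcases hxy with h | h
    · exact Or.inl h
    · rcases hyz with h' | h' <;> [exact absurd h' h; exact Or.inr h']
  total _ x y := by
    by_cases h : x = a
    · exact Or.inl (Or.inl h)
    · exact Or.inr (Or.inr h)

lemma topAt_strict [DecidableEq X] {i : N} {a x y : X} :
    (topAt N a).strict i x y ↔ x = a ∧ y ≠ a := by
  simp only [strict, topAt, not_or, not_not, ne_eq]
  constructor
  · rintro ⟨-, h2, h3⟩; exact ⟨h3, h2⟩
  · rintro ⟨h1, h2⟩; exact ⟨Or.inl h1, h2, h1⟩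

lemma topAt_PE [Nonempty N] [DecidableEq X] (a : X) : (topAt N a).PE = {a} := by
  ext x
  simp only [PE, Set.mem_setOf_eq, Set.mem_singleton_iff]
  constructor
  · intro h
    by_contra hx
    exact h ⟨a, fun i => Or.inl rfl, Classical.arbitrary N, topAt_strict.mpr ⟨rfl, hx⟩⟩
  · rintro rfl ⟨z, hz, j, hj⟩
    exact (topAt_strict.mp hj).2 rfl

lemma topAt_rank [Fintype X] [DecidableEq X] (i : N) (a : X) :
    (topAt N a).rank i a = 1 := by
  rw [rank_eq_one_iff]
  intro z hz
  exact (topAt_strict.mp hz).2 rfl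

end PrefProfile

/-- `P̄` is simultaneously a ⊵-maximal element and a ⊵-upper bound
iff there exists a unique `x* ∈ X` ranked first by every individual under `P̄`. -/
theorem stmt_0 {N X : Type*} [Fintype N] [Fintype X] [Nonempty N] [Nonempty X]
    (Pbar : PrefProfile N X) :
    (Pbar.Maximal ∧ Pbar.UpperBound) ↔ (∃! xstar : X, ∀ i : N, Pbar.rank i xstar = 1) := by
  classical
  constructor
  · rintro ⟨hmax, hub⟩
    -- every Pareto-efficient allocation has all ranks 1
    obtain ⟨ψ, hmap, hsurj, hrank⟩ := hub (PrefProfile.indiff N X)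
    have hall : ∀ y ∈ Pbar.PE, ∀ i, Pbar.rank i y = 1 := by
      intro y hy i
      obtain ⟨x, hx, rfl⟩ := hsurj hy
      have h := hrank x hx i
      rw [PrefProfile.indiff_rank] at h
      exact le_antisymm h (Pbar.one_le_rank i _)
    obtain ⟨x0, hx0⟩ := Pbar.PE_nonempty
    refine ⟨x0, hall x0 hx0, ?_⟩
    intro y hy
    by_contra hne
    -- y is in PE since all its ranks are 1
    have hyPE : y ∈ Pbar.PE := by
      rintro ⟨z, hz, j, hj⟩
      exact (Pbar.rank_eq_one_iff j y).mp (hy j) z hj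
    -- the profile putting y strictly on top dominates Pbar
    have hdom : PrefProfile.Dom (PrefProfile.topAt N y) Pbar := by
      refine ⟨fun _ => y, fun x hx => ?_, fun a ha => ?_, fun x hx i => ?_⟩
      · rw [PrefProfile.topAt_PE]; rfl
      · rw [PrefProfile.topAt_PE] at ha
        exact ⟨y, hyPE, ha.symm⟩
      · rw [PrefProfile.topAt_rank]
        exact Pbar.one_le_rank i x
    -- by maximality, Pbar dominates it back, forcing PE(Pbar) to be a singleton
    obtain ⟨-, φ, hφmap, hφsurj, -⟩ := hmax _ hdom
    rw [PrefProfile.topAt_PE] at hφsurj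
    obtain ⟨a, ha, hay⟩ := hφsurj hyPE
    obtain ⟨b, hb, hbx0⟩ := hφsurj hx0
    rw [Set.mem_singleton_iff] at ha hb
    subst ha; subst hb
    exact hne (hay ▸ hbx0)
  · rintro ⟨xstar, hx, huniq⟩
    have htop : ∀ i z, Pbar.pref i xstar z :=
      fun i z => PrefProfile.top_of_rank_one (hx i) z
    have hxPE : xstar ∈ Pbar.PE := by
      rintro ⟨z, hz, j, hj⟩
      exact (Pbar.rank_eq_one_iff j xstar).mp (hx j) z hj
    have hPE : Pbar.PE = {xstar} := by
      ext y
      constructor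
      · intro hy
        by_contra hne
        refine hy ⟨xstar, fun i => htop i y, ?_⟩
        by_contra hns
        push_neg at hns
        have hyx : ∀ i, Pbar.pref i y xstar := by
          intro i
          have := hns i
          simp only [PrefProfile.strict, not_and, not_not] at this
          exact this (htop i y)
        have : ∀ i, Pbar.rank i y = 1 := by
          intro i
          rw [Pbar.rank_eq_one_iff]
          intro z hz
          exact hz.2 (Pbar.trans i y xstar z (hyx i) (htop i z))
        exact hne (huniq y this)
      · rintro rfl
        exact hxPE
    have hub : Pbar.UpperBound := by
      intro P'
      obtain ⟨w, hw⟩ := P'.PE_nonempty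
      refine ⟨fun _ => xstar, fun x hxm => ?_, fun a ha => ?_, fun x hxm i => ?_⟩
      · rw [hPE]; rfl
      · rw [hPE] at ha
        exact ⟨w, hw, ha.symm⟩
      · rw [hx i]
        exact P'.one_le_rank i x
    exact ⟨fun P' h => ⟨h, hub P'⟩, hub⟩
end

section
/- If a preference profile P on X satisfies PE(P) ≠ X (i.e., some allocation is strictly Pareto dominated), then P is not a ⊵-minimal element. -/
/-- if `PE(P) ≠ X`, then `P` is not a ⊵-minimal element. -/
theorem stmt_2 {N X : Type*} [Fintype N] [Fintype X] [Nonempty N] [Nonempty X]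
    (P : PrefProfile N X) (h : P.PE ≠ Set.univ) :
    ¬ P.Minimal := by
  classical
  obtain ⟨y, hy⟩ : ∃ y, y ∉ P.PE := by
    by_contra h'
    push_neg at h'
    exact h (Set.eq_univ_of_forall h')
  -- strict Pareto dominance
  let D : X → X → Prop := fun z x => (∀ i, P.pref i z x) ∧ ∃ j, P.strict j z x
  have Dtrans : ∀ a b c, D a b → D b c → D a c := by
    rintro a b c ⟨h1, j, hj⟩ ⟨h2, _⟩
    refine ⟨fun i => P.trans i a b c (h1 i) (h2 i), j, ?_, ?_⟩
    · exact P.trans j a b c hj.1 (h2 j)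
    · intro hc
      exact hj.2 (P.trans j b c a (h2 j) hc)
  have Dirr : ∀ a, ¬ D a a := by
    rintro a ⟨_, j, hj⟩
    exact hj.2 (P.refl j a)
  haveI : IsTrans X D := ⟨fun a b c => Dtrans a b c⟩
  haveI : IsIrrefl X D := ⟨Dirr⟩
  have wf : WellFounded D := Finite.wellFounded_of_trans_of_irrefl D
  -- every allocation is Pareto efficient or dominated by a Pareto efficient one
  have key : ∀ x : X, x ∈ P.PE ∨ ∃ u, u ∈ P.PE ∧ D u x := by
    intro x
    induction x using wf.induction with
    | _ x ih =>
      by_cases hx : x ∈ P.PE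
      · exact Or.inl hx
      · have : ∃ z, D z x := by
          simpa [PrefProfile.PE, D] using hx
        obtain ⟨z, hz⟩ := this
        rcases ih z hz with h1 | ⟨u, hu1, hu2⟩
        · exact Or.inr ⟨z, h1, hz⟩
        · exact Or.inr ⟨u, hu1, Dtrans u z x hu2 hz⟩
  obtain ⟨u, huPE, hud⟩ := (key y).resolve_left hy
  have huy : u ≠ y := fun hc => hy (hc ▸ huPE)
  -- the modified profile: y is merged into u's indifference class
  let σ : X → X := fun a => if a = y then u else a
  have hσy : σ y = u := if_pos rfl
  have hσ : ∀ a, a ≠ y → σ a = a := fun a ha => if_neg ha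
  let P' : PrefProfile N X :=
    { pref := fun i a b => P.pref i (σ a) (σ b)
      refl := fun i x => P.refl i _
      trans := fun i x y' z => P.trans i _ _ _
      total := fun i x y' => P.total i _ _ }
  -- characterization of PE(P')
  have hback : ∀ x, σ x ∈ P.PE → x ∈ P'.PE := by
    rintro x hx ⟨z, hz1, j, hz2⟩
    exact hx ⟨σ z, hz1, j, hz2⟩
  have hPE' : P'.PE = insert y P.PE := by
    ext x
    constructor
    · intro hx
      by_cases hxy : x = y
      · exact Set.mem_insert_iff.2 (Or.inl hxy)
      · refine Set.mem_insert_iff.2 (Or.inr ?_)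
        rintro ⟨z, hz1, j, hz2⟩
        by_cases hzy : z = y
        · rw [hzy] at hz1 hz2
          refine hx ⟨u, ?_, j, ?_, ?_⟩
          · intro i
            show P.pref i (σ u) (σ x)
            rw [hσ u huy, hσ x hxy]
            exact P.trans i u y x (hud.1 i) (hz1 i)
          · show P.pref j (σ u) (σ x)
            rw [hσ u huy, hσ x hxy]
            exact P.trans j u y x (hud.1 j) (hz1 j)
          · show ¬ P.pref j (σ x) (σ u)
            rw [hσ u huy, hσ x hxy]
            intro hc
            exact hz2.2 (P.trans j x u y hc (hud.1 j))
        · refine hx ⟨z, ?_, j, ?_, ?_⟩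
          · intro i
            show P.pref i (σ z) (σ x)
            rw [hσ z hzy, hσ x hxy]
            exact hz1 i
          · show P.pref j (σ z) (σ x)
            rw [hσ z hzy, hσ x hxy]
            exact hz2.1
          · show ¬ P.pref j (σ x) (σ z)
            rw [hσ z hzy, hσ x hxy]
            exact hz2.2
    · intro hx
      rcases Set.mem_insert_iff.1 hx with hxy | hxPE
      · rw [hxy]
        exact hback y (by rw [hσy]; exact huPE)
      · have hxy : x ≠ y := fun hc => hy (hc ▸ hxPE)
        exact hback x (by rw [hσ x hxy]; exact hxPE)
  -- rank comparison
  have hrank : ∀ x (i : N), P.rank i (σ x) ≤ P'.rank i x := by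
    intro x i
    have hsub : {z : X | P.strict i z (σ x)} ⊆ {z : X | P'.strict i z x} := by
      intro z hz
      by_cases hzy : z = y
      · rw [hzy] at hz ⊢
        show P.pref i (σ y) (σ x) ∧ ¬ P.pref i (σ x) (σ y)
        rw [hσy]
        exact ⟨P.trans i u y (σ x) (hud.1 i) hz.1,
          fun hc => hz.2 (P.trans i (σ x) u y hc (hud.1 i))⟩
      · show P.pref i (σ z) (σ x) ∧ ¬ P.pref i (σ x) (σ z)
        rw [hσ z hzy]
        exact hz
    exact Nat.add_le_add_left (Set.ncard_le_ncard hsub (Set.toFinite _)) 1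
  -- P ⊵ P'
  have hdom : P.Dom P' := by
    refine ⟨σ, ?_, ?_, fun x _ i => hrank x i⟩
    · intro x hx
      rw [hPE'] at hx
      rcases Set.mem_insert_iff.1 hx with hxy | hxPE
      · rw [hxy, hσy]; exact huPE
      · have hxy : x ≠ y := fun hc => hy (hc ▸ hxPE)
        rw [hσ x hxy]; exact hxPE
    · intro x hx
      have hxy : x ≠ y := fun hc => hy (hc ▸ hx)
      exact ⟨x, by rw [hPE']; exact Set.mem_insert_of_mem _ hx, hσ x hxy⟩
  -- conclude: no surjection from PE(P) onto the strictly larger PE(P')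
  intro hmin
  obtain ⟨ψ, hm, hs, _⟩ := (hmin P' hdom).2
  have hcard1 : P'.PE.ncard ≤ (ψ '' P.PE).ncard :=
    Set.ncard_le_ncard hs (Set.toFinite _)
  have hcard2 : (ψ '' P.PE).ncard ≤ P.PE.ncard :=
    Set.ncard_image_le (Set.toFinite _)
  have hcard3 : P'.PE.ncard = P.PE.ncard + 1 := by
    rw [hPE', Set.ncard_insert_of_notMem hy (Set.toFinite _)]
  omega
end

section
/- Suppose N ≤ M. Within the class of private preference profiles on X, a profile P̄ is ⊵-maximal if and only if there exist N pairwise distinct widgets x̄_1, ..., x̄_N in M such that R(P̄_i, x̄_i) = 1 for every i ∈ N, i.e., every individual's favorite widget in M is different. -/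
/-- The set of admissible allocations: each individual gets one and only one
widget, and no widget is assigned twice. -/
abbrev Alloc (N M : Type*) := {x : N → M // Function.Injective x}

/-- A private preference profile: each individual `i` has a strict linear order
(`pref i`) on the set of widgets `M`. -/
structure PrivProfile (N M : Type*) where
  pref : N → M → M → Prop
  irrefl : ∀ i x, ¬ pref i x x
  trans : ∀ i x y z, pref i x y → pref i y z → pref i x z
  total : ∀ i x y, x ≠ y → pref i x y ∨ pref i y x

namespace PrivProfile

variable {N M : Type*}

/-- The ranking `R(P_i, m) = 1 + #{k ∈ M : k ≻_{P_i} m}`. -/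
noncomputable def rank (P : PrivProfile N M) (i : N) (m : M) : ℕ :=
  1 + {k : M | P.pref i k m}.ncard

/-- Weak preference over widgets induced by the strict linear order. -/
def wpref (P : PrivProfile N M) (i : N) (a b : M) : Prop :=
  P.pref i a b ∨ a = b

/-- The set of Pareto efficient allocations. -/
def PE (P : PrivProfile N M) : Set (Alloc N M) :=
  {x | ¬ ∃ z : Alloc N M,
    (∀ i, P.wpref i (z.1 i) (x.1 i)) ∧ (∃ j, P.pref j (z.1 j) (x.1 j))}

/-- `P ⊵ P'`: there is a surjection `ψ` from `PE(P')` onto `PE(P)` weakly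
improving all ranking vectors. -/
def Dom (P P' : PrivProfile N M) : Prop :=
  ∃ ψ : Alloc N M → Alloc N M, Set.MapsTo ψ P'.PE P.PE ∧ Set.SurjOn ψ P'.PE P.PE ∧
    ∀ x ∈ P'.PE, ∀ i, P.rank i ((ψ x).1 i) ≤ P'.rank i (x.1 i)

/-- `P ≜ P'`. -/
def Equiv (P P' : PrivProfile N M) : Prop := Dom P P' ∧ Dom P' P

/-- `P` is ⊵-maximal within the class of private profiles. -/
def Maximal (P : PrivProfile N M) : Prop := ∀ P' : PrivProfile N M, Dom P' P → Equiv P' P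

/-- `P` is ⊵-minimal within the class of private profiles. -/
def Minimal (P : PrivProfile N M) : Prop := ∀ P' : PrivProfile N M, Dom P P' → Equiv P P'

end PrivProfile

namespace Aux

open PrivProfile

set_option linter.unusedSectionVars false
variable {N M : Type*} [Fintype N] [Fintype M]

lemma rank_pos (P : PrivProfile N M) (i : N) (m : M) : 1 ≤ P.rank i m :=
  Nat.le_add_right 1 _

lemma rank_eq_one_iff (P : PrivProfile N M) (i : N) (m : M) :
    P.rank i m = 1 ↔ ∀ k, ¬ P.pref i k m := by
  unfold PrivProfile.rank
  rw [Nat.add_eq_left, Set.ncard_eq_zero (Set.toFinite _), Set.eq_empty_iff_forall_notMem]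
  simp [Set.mem_setOf_eq]

lemma wpref_of_rank_one {P : PrivProfile N M} {i : N} {m : M}
    (h : P.rank i m = 1) (b : M) : P.wpref i m b := by
  rcases eq_or_ne m b with rfl | hne
  · exact Or.inr rfl
  · rcases P.total i m b hne with h1 | h1
    · exact Or.inl h1
    · exact absurd h1 ((rank_eq_one_iff P i m).1 h b)

lemma PE_eq_singleton {P : PrivProfile N M} {x : Alloc N M}
    (h : ∀ i, P.rank i (x.1 i) = 1) : P.PE = {x} := by
  ext y
  constructor
  · intro hy
    by_contra hne
    have hne' : y.1 ≠ x.1 := fun h' => hne (Subtype.ext h')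
    obtain ⟨j, hj⟩ : ∃ j, y.1 j ≠ x.1 j := Function.ne_iff.1 hne'
    refine hy ⟨x, fun i => wpref_of_rank_one (h i) _, j, ?_⟩
    rcases wpref_of_rank_one (h j) (y.1 j) with hp | hp
    · exact hp
    · exact absurd hp.symm hj
  · rintro rfl
    rintro ⟨z, hz, j, hj⟩
    exact (rank_eq_one_iff P j _).1 (h j) _ hj

lemma rank_le_of_wpref {P : PrivProfile N M} {i : N} {a b : M}
    (h : P.wpref i a b) : P.rank i a ≤ P.rank i b := by
  rcases h with h | rfl
  · exact Nat.add_le_add_left (Set.ncard_le_ncard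
      (fun k hk => P.trans i k a b hk h) (Set.toFinite _)) 1
  · rfl

lemma rank_lt_of_pref {P : PrivProfile N M} {i : N} {a b : M}
    (h : P.pref i a b) : P.rank i a < P.rank i b := by
  refine Nat.add_lt_add_left ?_ 1
  refine Set.ncard_lt_ncard ?_ (Set.toFinite _)
  constructor
  · exact fun k hk => P.trans i k a b hk h
  · intro hsub
    exact P.irrefl i a (hsub h)

lemma PE_nonempty_aux (P : PrivProfile N M) :
    ∀ n : ℕ, ∀ x : Alloc N M, (∑ i, P.rank i (x.1 i)) ≤ n → P.PE.Nonempty := by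
  intro n
  induction n using Nat.strong_induction_on with
  | _ n ih =>
    intro x hx
    by_cases hxPE : x ∈ P.PE
    · exact ⟨x, hxPE⟩
    · simp only [PE, Set.mem_setOf_eq, not_not] at hxPE
      obtain ⟨z, hz, j, hj⟩ := hxPE
      have hlt : (∑ i, P.rank i (z.1 i)) < ∑ i, P.rank i (x.1 i) := by
        refine Finset.sum_lt_sum (fun i _ => rank_le_of_wpref (hz i)) ?_
        exact ⟨j, Finset.mem_univ j, rank_lt_of_pref hj⟩
      exact ih (∑ i, P.rank i (z.1 i)) (lt_of_lt_of_le hlt hx) z le_rfl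

lemma PE_nonempty (P : PrivProfile N M) (h : Nonempty (Alloc N M)) :
    P.PE.Nonempty := by
  obtain ⟨x⟩ := h
  exact PE_nonempty_aux P _ x le_rfl

lemma dom_of_singletons {P P' : PrivProfile N M} {a b : Alloc N M}
    (hP : P.PE = {a}) (hP' : P'.PE = {b})
    (hr : ∀ i, P.rank i (a.1 i) ≤ P'.rank i (b.1 i)) : P.Dom P' := by
  refine ⟨fun _ => a, ?_, ?_, ?_⟩
  · intro x _; rw [hP]; rfl
  · rw [hP, hP']
    intro y hy
    exact ⟨b, rfl, hy.symm⟩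
  · intro x hx i
    rw [hP'] at hx
    rw [hx]
    exact hr i

end Aux

namespace Aux2

open PrivProfile Aux

variable {N M : Type*} [Fintype N] [Fintype M]

open Classical in
/-- The key used to order widgets: individual `i`'s assigned widget `ι i`
comes first, the rest are ordered by a fixed enumeration. -/
noncomputable def key (ι : N ↪ M) (i : N) (a : M) : ℕ :=
  if a = ι i then 0 else 1 + (Fintype.equivFin M a : ℕ)

lemma key_inj (ι : N ↪ M) (i : N) {a b : M} (h : key ι i a = key ι i b) : a = b := by
  classical
  unfold key at h
  by_cases ha : a = ι i
  · by_cases hb : b = ι i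
    · exact ha.trans hb.symm
    · simp only [ha, hb, if_true, if_false, if_pos rfl] at h
      omega
  · by_cases hb : b = ι i
    · simp only [ha, hb, if_true, if_false, if_pos rfl] at h
      omega
    · simp only [ha, hb, if_false] at h
      exact (Fintype.equivFin M).injective (Fin.ext (by omega))

/-- The profile where each individual `i` ranks `ι i` first. -/
noncomputable def topProfile (ι : N ↪ M) : PrivProfile N M where
  pref i a b := key ι i a < key ι i b
  irrefl i x := lt_irrefl _
  trans i x y z := Nat.lt_trans
  total i x y hxy := by
    rcases Nat.lt_trichotomy (key ι i x) (key ι i y) with h | h | h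
    · exact Or.inl h
    · exact absurd (key_inj ι i h) hxy
    · exact Or.inr h

lemma topProfile_rank_one (ι : N ↪ M) (i : N) :
    (topProfile ι).rank i (ι i) = 1 := by
  rw [Aux.rank_eq_one_iff]
  intro k hk
  have : key ι i (ι i) = 0 := by simp [key]
  simp only [topProfile, this] at hk
  exact Nat.not_lt_zero _ hk

end Aux2


/-- (with `N ≤ M`) a private profile `P̄` is ⊵-maximal iff there
exist `N` pairwise distinct widgets, one per individual, each ranked first by
the corresponding individual. -/
theorem stmt_5 {N M : Type*} [Fintype N] [Fintype M]
    (hNM : Fintype.card N ≤ Fintype.card M) (Pbar : PrivProfile N M) :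
    Pbar.Maximal ↔
      ∃ xbar : N → M, Function.Injective xbar ∧ ∀ i : N, Pbar.rank i (xbar i) = 1 := by
  obtain ⟨ι⟩ : Nonempty (N ↪ M) := Function.Embedding.nonempty_of_card_le hNM
  constructor
  · intro hmax
    set P' := Aux2.topProfile ι with hP'
    set I : Alloc N M := ⟨⇑ι, ι.injective⟩ with hI
    have hranks : ∀ i, P'.rank i (I.1 i) = 1 := fun i => Aux2.topProfile_rank_one ι i
    have hP'PE : P'.PE = {I} := Aux.PE_eq_singleton hranks
    have hne : Pbar.PE.Nonempty := Aux.PE_nonempty Pbar ⟨I⟩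
    have hDom : P'.Dom Pbar := by
      refine ⟨fun _ => I, ?_, ?_, ?_⟩
      · intro x _; rw [hP'PE]; rfl
      · rw [hP'PE]
        intro y hy
        obtain ⟨x0, hx0⟩ := hne
        exact ⟨x0, hx0, hy.symm⟩
      · intro x _ i
        rw [hranks i]
        exact Aux.rank_pos Pbar i _
    obtain ⟨ψ', hmap', hsurj', hrank'⟩ := (hmax P' hDom).2
    have hIPE : I ∈ P'.PE := by rw [hP'PE]; rfl
    refine ⟨(ψ' I).1, (ψ' I).2, fun i => ?_⟩
    have h1 : Pbar.rank i ((ψ' I).1 i) ≤ P'.rank i (I.1 i) := hrank' I hIPE i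
    rw [hranks i] at h1
    exact le_antisymm h1 (Aux.rank_pos Pbar i _)
  · rintro ⟨xbar, hinj, hr⟩
    set X : Alloc N M := ⟨xbar, hinj⟩ with hX
    have hPE : Pbar.PE = {X} := Aux.PE_eq_singleton hr
    intro P' hDom
    refine ⟨hDom, ?_⟩
    obtain ⟨ψ, hmap, hsurj, hrank⟩ := hDom
    set b : Alloc N M := ψ X with hb
    have hbPE : b ∈ P'.PE := hmap (by rw [hPE]; rfl)
    have hP'PE : P'.PE = {b} := by
      apply Set.eq_singleton_iff_unique_mem.2
      refine ⟨hbPE, fun y hy => ?_⟩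
      obtain ⟨x, hx, hxy⟩ := hsurj hy
      rw [hPE] at hx
      rw [← hxy, hx]
    exact Aux.dom_of_singletons hPE hP'PE (fun i => by
      have := hrank X (by rw [hPE]; rfl) i
      calc Pbar.rank i (X.1 i) = 1 := hr i
        _ ≤ P'.rank i (b.1 i) := Aux.rank_pos P' i _)
end

section
/- Suppose N ≤ M. Every private preference profile P̄ in which all individuals' favorite widgets are pairwise distinct (i.e., there exist N distinct widgets x̄_1, ..., x̄_N with R(P̄_i, x̄_i) = 1 for all i) is a ⊵-upper bound within the class of private profiles: P̄ ⊵ P' for every private profile P'. Every private preference profile P̲ admitting a subset M_N ⊆ M with #M_N = N such that R(P̲_i, z) ≤ N for all i ∈ N and z ∈ M_N and such that all individuals' preferences restricted to M_N coincide, is a ⊵-lower bound within the class of private profiles: P' ⊵ P̲ for every private profile P'. -/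
set_option linter.unusedSectionVars false
set_option maxHeartbeats 1000000

open scoped Classical

namespace PrivProfile

variable {N M : Type*} [Fintype M]

lemma wpref_refl (P : PrivProfile N M) (i : N) (a : M) : P.wpref i a a := Or.inr rfl

lemma one_le_rank (P : PrivProfile N M) (i : N) (m : M) : 1 ≤ P.rank i m :=
  Nat.le_add_right 1 _

lemma rank_le_of_wpref (P : PrivProfile N M) {i : N} {a b : M} (h : P.wpref i a b) :
    P.rank i a ≤ P.rank i b := by
  rcases h with h | rfl
  · refine Nat.add_le_add_left (Set.ncard_le_ncard ?_ (Set.toFinite _)) 1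
    intro k hk
    exact P.trans i k a b hk h
  · exact le_rfl

lemma rank_lt_of_pref (P : PrivProfile N M) {i : N} {a b : M} (h : P.pref i a b) :
    P.rank i a < P.rank i b := by
  refine Nat.add_lt_add_left (Set.ncard_lt_ncard ⟨?_, ?_⟩ (Set.toFinite _)) 1
  · intro k hk; exact P.trans i k a b hk h
  · intro hsub
    exact P.irrefl i a (hsub h)

lemma wpref_of_rank_le (P : PrivProfile N M) {i : N} {a b : M}
    (h : P.rank i a ≤ P.rank i b) : P.wpref i a b := by
  by_contra hc
  rcases ne_or_eq a b with hne | rfl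
  · rcases P.total i a b hne with h1 | h1
    · exact hc (Or.inl h1)
    · exact absurd h (not_le.2 (P.rank_lt_of_pref h1))
  · exact hc (Or.inr rfl)

lemma eq_of_rank_eq (P : PrivProfile N M) {i : N} {a b : M}
    (h : P.rank i a = P.rank i b) : a = b := by
  by_contra hne
  rcases P.total i a b hne with h1 | h1
  · exact absurd h (Nat.ne_of_lt (P.rank_lt_of_pref h1))
  · exact absurd h.symm (Nat.ne_of_lt (P.rank_lt_of_pref h1))

lemma rank_le_card (P : PrivProfile N M) (i : N) (m : M) :
    P.rank i m ≤ Fintype.card M := by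
  have h1 : {k : M | P.pref i k m} ⊆ {m}ᶜ := by
    intro k hk hkm
    rw [Set.mem_singleton_iff] at hkm
    exact P.irrefl i m (hkm ▸ hk)
  have h2 : {k : M | P.pref i k m}.ncard ≤ ({m}ᶜ : Set M).ncard :=
    Set.ncard_le_ncard h1 (Set.toFinite _)
  have h3 : ({m}ᶜ : Set M).ncard = Fintype.card M - 1 := by
    rw [Set.ncard_eq_toFinset_card', Set.toFinset_compl, Set.toFinset_singleton,
      Finset.card_compl, Finset.card_singleton]
  have hM : 1 ≤ Fintype.card M := Fintype.card_pos_iff.2 ⟨m⟩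
  unfold rank
  omega

lemma rank_eq_one_iff (P : PrivProfile N M) {i : N} {m : M} :
    P.rank i m = 1 ↔ ∀ k, ¬ P.pref i k m := by
  unfold rank
  constructor
  · intro h k hk
    have : {k : M | P.pref i k m}.ncard = 0 := by omega
    rw [Set.ncard_eq_zero (Set.toFinite _)] at this
    exact absurd this (Set.nonempty_iff_ne_empty.1 ⟨k, hk⟩)
  · intro h
    have : {k : M | P.pref i k m} = ∅ := by
      ext k; simp [h k]
    rw [this, Set.ncard_empty]

/-- the top (most preferred) element of a finset, junk if empty -/
noncomputable def topIn [Nonempty M] (P : PrivProfile N M) (i : N) (S : Finset M) : M :=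
  if h : S.Nonempty then (S.exists_min_image (P.rank i) h).choose else Classical.arbitrary M

lemma topIn_mem [Nonempty M] (P : PrivProfile N M) (i : N) {S : Finset M}
    (h : S.Nonempty) : P.topIn i S ∈ S := by
  rw [topIn, dif_pos h]
  exact (S.exists_min_image (P.rank i) h).choose_spec.1

lemma topIn_not_pref [Nonempty M] (P : PrivProfile N M) (i : N) {S : Finset M}
    (h : S.Nonempty) {w : M} (hw : w ∈ S) : ¬ P.pref i w (P.topIn i S) := by
  intro hc
  have h2 := (S.exists_min_image (P.rank i) h).choose_spec.2 w hw
  rw [topIn, dif_pos h] at hc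
  exact absurd h2 (not_le.2 (P.rank_lt_of_pref hc))


variable [Nonempty M]

/-- serial dictatorship pick: at stage `k`, individual `f k` picks the best
remaining widget. -/
noncomputable def pick [Nonempty M] (P : PrivProfile N M) (f : ℕ → N) : ℕ → M
  | k => P.topIn (f k)
      (Finset.univ \ (Finset.range k).attach.image (fun j => pick P f j.1))
termination_by k => k
decreasing_by exact Finset.mem_range.mp j.2

lemma pick_eq [Nonempty M] (P : PrivProfile N M) (f : ℕ → N) (k : ℕ) :
    P.pick f k = P.topIn (f k) (Finset.univ \ (Finset.range k).image (P.pick f)) := by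
  conv_lhs => rw [pick]
  congr 2
  ext m
  simp only [Finset.mem_image, Finset.mem_attach, true_and, Subtype.exists, Finset.mem_range]
  constructor
  · rintro ⟨a, ha, rfl⟩; exact ⟨a, ha, rfl⟩
  · rintro ⟨a, ha, rfl⟩; exact ⟨a, ha, rfl⟩

lemma taken_card (P : PrivProfile N M) (f : ℕ → N) (k : ℕ) (hk : k < Fintype.card M) :
    (Finset.univ \ (Finset.range k).image (P.pick f)).Nonempty := by
  have h1 : ((Finset.range k).image (P.pick f)).card ≤ k := by
    calc ((Finset.range k).image (P.pick f)).card ≤ (Finset.range k).card :=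
      Finset.card_image_le
    _ = k := Finset.card_range k
  rw [← Finset.card_pos, ← Finset.compl_eq_univ_sdiff, Finset.card_compl]
  omega

lemma pick_mem (P : PrivProfile N M) (f : ℕ → N) (k : ℕ) (hk : k < Fintype.card M) :
    P.pick f k ∈ Finset.univ \ (Finset.range k).image (P.pick f) := by
  rw [pick_eq]
  exact P.topIn_mem _ (P.taken_card f k hk)

lemma pick_not_pref (P : PrivProfile N M) (f : ℕ → N) (k : ℕ) (hk : k < Fintype.card M)
    {w : M} (hw : w ∉ (Finset.range k).image (P.pick f)) :
    ¬ P.pref (f k) w (P.pick f k) := by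
  rw [pick_eq]
  exact P.topIn_not_pref _ (P.taken_card f k hk) (by simp [hw])

lemma pick_injOn (P : PrivProfile N M) (f : ℕ → N) {j k : ℕ} (hjk : j < k)
    (hk : k < Fintype.card M) : P.pick f j ≠ P.pick f k := by
  intro h
  have := P.pick_mem f k hk
  rw [Finset.mem_sdiff] at this
  exact this.2 (Finset.mem_image.2 ⟨j, Finset.mem_range.2 hjk, h⟩)

lemma rank_pick_le (P : PrivProfile N M) (f : ℕ → N) (k : ℕ) (hk : k < Fintype.card M) :
    P.rank (f k) (P.pick f k) ≤ k + 1 := by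
  have hsub : {w : M | P.pref (f k) w (P.pick f k)} ⊆ ((Finset.range k).image (P.pick f) : Finset M) := by
    intro w hw
    by_contra hc
    exact P.pick_not_pref f k hk (by simpa using hc) hw
  have := Set.ncard_le_ncard hsub (Set.toFinite _)
  rw [Set.ncard_coe_finset] at this
  have h2 : ((Finset.range k).image (P.pick f)).card ≤ k :=
    le_trans Finset.card_image_le (le_of_eq (Finset.card_range k))
  unfold rank
  omega

lemma pick_congr (P : PrivProfile N M) (f g : ℕ → N) (k : ℕ)
    (h : ∀ j ≤ k, f j = g j) : P.pick f k = P.pick g k := by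
  induction k using Nat.strong_induction_on with
  | _ k ih =>
    rw [pick_eq, pick_eq, h k le_rfl]
    congr 2
    apply Finset.image_congr
    intro j hj
    rw [Finset.coe_range, Set.mem_Iio] at hj
    exact ih j hj (fun l hl => h l (le_of_lt (lt_of_le_of_lt hl hj)))

end PrivProfile

section SD
variable {N M : Type*} [Fintype N] [Fintype M] [Nonempty M]

lemma sd_inj (P : PrivProfile N M) (hNM : Fintype.card N ≤ Fintype.card M)
    (f : ℕ → N) (pos : N → ℕ) (hf : ∀ i, f (pos i) = i)
    (hlt : ∀ i, pos i < Fintype.card N) :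
    Function.Injective (fun i => P.pick f (pos i)) := by
  intro a b hab
  by_contra hne
  have hpos : pos a ≠ pos b := fun h => hne (by rw [← hf a, ← hf b, h])
  rcases lt_or_gt_of_ne hpos with h | h
  · exact P.pick_injOn f h (lt_of_lt_of_le (hlt b) hNM) hab
  · exact P.pick_injOn f h (lt_of_lt_of_le (hlt a) hNM) hab.symm

lemma sd_mem_PE (P : PrivProfile N M) (hNM : Fintype.card N ≤ Fintype.card M)
    (f : ℕ → N) (pos : N → ℕ) (hf : ∀ i, f (pos i) = i)
    (hlt : ∀ i, pos i < Fintype.card N)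
    (hpf : ∀ k < Fintype.card N, pos (f k) = k) :
    (⟨fun i => P.pick f (pos i), sd_inj P hNM f pos hf hlt⟩ : Alloc N M) ∈ P.PE := by
  rintro ⟨z, hz, j, hj⟩
  set n := Fintype.card N with hn
  set T := (Finset.range n).filter (fun k => z.1 (f k) ≠ P.pick f k) with hT
  have hTne : T.Nonempty := by
    by_contra hTe
    rw [Finset.not_nonempty_iff_eq_empty] at hTe
    have hall : ∀ k < n, z.1 (f k) = P.pick f k := by
      intro k hk
      by_contra hc
      have : k ∈ T := by rw [hT]; simp [hk, hc]
      rw [hTe] at this; simp at this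
    have : z.1 j = P.pick f (pos j) := by
      have := hall (pos j) (hlt j)
      rwa [hf j] at this
    rw [this] at hj
    exact P.irrefl j _ hj
  set k := T.min' hTne with hkdef
  have hkT : k ∈ T := T.min'_mem hTne
  have hkn : k < n := by
    have := (Finset.mem_filter.1 hkT).1
    exact Finset.mem_range.1 this
  have hzk : z.1 (f k) ≠ P.pick f k := (Finset.mem_filter.1 hkT).2
  have hkM : k < Fintype.card M := lt_of_lt_of_le hkn hNM
  have hnotmem : z.1 (f k) ∉ (Finset.range k).image (P.pick f) := by
    intro hmem
    obtain ⟨j', hj', hpj⟩ := Finset.mem_image.1 hmem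
    rw [Finset.mem_range] at hj'
    have hj'n : j' < n := lt_trans hj' hkn
    have hj'T : j' ∉ T := by
      intro hc
      exact absurd (T.min'_le j' hc) (not_le.2 hj')
    have hj'eq : z.1 (f j') = P.pick f j' := by
      by_contra hc
      exact hj'T (by rw [hT]; simp [hj'n, hc])
    have : z.1 (f j') = z.1 (f k) := by rw [hj'eq, hpj]
    have hff : f j' = f k := z.2 this
    have : j' = k := by
      have h1 := hpf j' hj'n
      have h2 := hpf k hkn
      rw [← h1, ← h2, hff]
    omega
  have hwp := hz (f k)
  simp only at hwp
  rcases hwp with h | h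
  · rw [hpf k hkn] at h
    exact P.pick_not_pref f k hkM hnotmem h
  · rw [hpf k hkn] at h
    exact hzk h

end SD

section Key
variable {N M : Type*} [Fintype N] [Fintype M] [Nonempty M]

lemma exists_next (P : PrivProfile N M) (x : Alloc N M) (hx : x ∈ P.PE)
    (A : Finset N) (hA : A ≠ Finset.univ) :
    ∃ i, i ∉ A ∧ ∀ w, P.pref i w (x.1 i) → ∃ j ∈ A, x.1 j = w := by
  by_contra hcon
  push_neg at hcon
  -- hcon : ∀ i ∉ A, ∃ w, pref i w (x i) ∧ ∀ j ∈ A, x j ≠ w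
  set U := Finset.univ \ A.image x.1 with hU
  have hxU : ∀ i, i ∉ A → x.1 i ∈ U := by
    intro i hi
    rw [hU, Finset.mem_sdiff]
    refine ⟨Finset.mem_univ _, ?_⟩
    intro hmem
    obtain ⟨j, hj, hje⟩ := Finset.mem_image.1 hmem
    exact hi (x.2 hje ▸ hj)
  set t : N → M := fun i => P.topIn i U with ht
  have hUne : ∀ i, i ∉ A → U.Nonempty := fun i hi => ⟨x.1 i, hxU i hi⟩
  have htU : ∀ i, i ∉ A → t i ∈ U := fun i hi => P.topIn_mem i (hUne i hi)
  have htp : ∀ i, i ∉ A → P.pref i (t i) (x.1 i) := by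
    intro i hi
    obtain ⟨w, hw1, hw2⟩ := hcon i hi
    have hwU : w ∈ U := by
      rw [hU, Finset.mem_sdiff]
      refine ⟨Finset.mem_univ _, ?_⟩
      intro hmem
      obtain ⟨j, hj, hje⟩ := Finset.mem_image.1 hmem
      exact hw2 j hj hje
    have htne : t i ≠ x.1 i := by
      intro he
      apply P.topIn_not_pref i (hUne i hi) hwU
      show P.pref i w (t i)
      rw [he]
      exact hw1
    rcases P.total i (t i) (x.1 i) htne with h | h
    · exact h
    · exact absurd h (P.topIn_not_pref i (hUne i hi) (hxU i hi))
  by_cases hcase : ∃ i, i ∉ A ∧ t i ∉ Finset.univ.image x.1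
  · obtain ⟨i, hi, hti⟩ := hcase
    have hinj : Function.Injective (Function.update x.1 i (t i)) := by
      intro a b hab
      rw [Function.update_apply, Function.update_apply] at hab
      by_cases ha : a = i <;> by_cases hb : b = i
      · rw [ha, hb]
      · rw [if_pos ha, if_neg hb] at hab
        exact absurd (Finset.mem_image.2 ⟨b, Finset.mem_univ _, hab.symm⟩) hti
      · rw [if_neg ha, if_pos hb] at hab
        exact absurd (Finset.mem_image.2 ⟨a, Finset.mem_univ _, hab⟩) hti
      · rw [if_neg ha, if_neg hb] at hab
        exact x.2 hab
    refine hx ⟨⟨Function.update x.1 i (t i), hinj⟩, ?_, ⟨i, ?_⟩⟩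
    · intro i'
      show P.wpref i' (Function.update x.1 i (t i) i') (x.1 i')
      rcases eq_or_ne i' i with rfl | hne
      · exact Or.inl (by rw [Function.update_self]; exact htp i' hi)
      · exact Or.inr (by rw [Function.update_of_ne hne])
    · show P.pref i (Function.update x.1 i (t i) i) (x.1 i)
      rw [Function.update_self]
      exact htp i hi
  · push_neg at hcase
    -- all t i assigned; build trading cycle
    have hg : ∀ i, ∃ j, i ∉ A → x.1 j = t i := by
      intro i
      by_cases hi : i ∉ A
      · obtain ⟨j, _, hje⟩ := Finset.mem_image.1 (hcase i hi)
        exact ⟨j, fun _ => hje⟩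
      · exact ⟨i, fun h => absurd h hi⟩
    choose g hgspec using hg
    have hgA : ∀ i, i ∉ A → g i ∉ A := by
      intro i hi hgi
      have h1 := htU i hi
      rw [hU, Finset.mem_sdiff] at h1
      exact h1.2 (Finset.mem_image.2 ⟨g i, hgi, hgspec i hi⟩)
    have hgne : ∀ i, i ∉ A → g i ≠ i := by
      intro i hi he
      have := hgspec i hi
      rw [he] at this
      exact P.irrefl i (x.1 i) (this ▸ htp i hi)
    obtain ⟨i0, hi0⟩ : ∃ i0, i0 ∉ A := by
      by_contra hall
      push_neg at hall
      exact hA (Finset.eq_univ_iff_forall.2 hall)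
    have hiter : ∀ s, g^[s] i0 ∉ A := by
      intro s
      induction s with
      | zero => simpa using hi0
      | succ s ih => rw [Function.iterate_succ_apply']; exact hgA _ ih
    -- pigeonhole
    obtain ⟨a, ha, b, hb, hab, heq⟩ :
        ∃ a ∈ Finset.range (Fintype.card N + 1), ∃ b ∈ Finset.range (Fintype.card N + 1),
          a ≠ b ∧ g^[a] i0 = g^[b] i0 := by
      have := Finset.exists_ne_map_eq_of_card_lt_of_maps_to
        (s := Finset.range (Fintype.card N + 1)) (t := (Finset.univ : Finset N))
        (by simp) (fun a _ => Finset.mem_univ (g^[a] i0))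
      obtain ⟨a, ha, b, hb, hne, he⟩ := this
      exact ⟨a, ha, b, hb, hne, he⟩
    -- wlog a < b
    obtain ⟨a, b, hlt2, heq2⟩ : ∃ a b : ℕ, a < b ∧ g^[a] i0 = g^[b] i0 := by
      rcases lt_or_gt_of_ne hab with h | h
      · exact ⟨a, b, h, heq⟩
      · exact ⟨b, a, h, heq.symm⟩
    set j0 := g^[a] i0 with hj0
    set p := b - a with hpdef
    have hp : 0 < p := by omega
    have hper : g^[p] j0 = j0 := by
      rw [hj0, ← Function.iterate_add_apply, hpdef]
      rw [Nat.sub_add_cancel (le_of_lt hlt2)]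
      exact heq2.symm
    have hj0A : j0 ∉ A := hiter a
    set C := (Finset.range p).image (fun s => g^[s] j0) with hC
    have hj0C : j0 ∈ C := Finset.mem_image.2 ⟨0, Finset.mem_range.2 hp, rfl⟩
    have hCA : ∀ c ∈ C, c ∉ A := by
      intro c hc
      obtain ⟨s, _, rfl⟩ := Finset.mem_image.1 hc
      rw [hj0, ← Function.iterate_add_apply]
      exact hiter _
    have hgC : ∀ c ∈ C, g c ∈ C := by
      intro c hc
      obtain ⟨s, hs, rfl⟩ := Finset.mem_image.1 hc
      rw [Finset.mem_range] at hs
      rw [← Function.iterate_succ_apply' g s j0]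
      rcases eq_or_lt_of_le (Nat.succ_le_of_lt hs) with he | hlt3
      · rw [he, hper]
        exact hj0C
      · exact Finset.mem_image.2 ⟨s + 1, Finset.mem_range.2 hlt3, rfl⟩
    have hsurj : ∀ c ∈ C, ∃ d, ∃ _ : d ∈ C, g d = c := by
      intro c hc
      obtain ⟨s, hs, rfl⟩ := Finset.mem_image.1 hc
      rw [Finset.mem_range] at hs
      rcases Nat.eq_zero_or_pos s with rfl | hspos
      · refine ⟨g^[p - 1] j0, Finset.mem_image.2 ⟨p - 1, Finset.mem_range.2 (by omega), rfl⟩, ?_⟩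
        have h2 : g (g^[p - 1] j0) = g^[p] j0 := by
          have h3 := (Function.iterate_succ_apply' g (p - 1) j0).symm
          rw [h3]
          congr 1
          omega
        rw [h2, hper]
        simp
      · refine ⟨g^[s - 1] j0, Finset.mem_image.2 ⟨s - 1, Finset.mem_range.2 (by omega), rfl⟩, ?_⟩
        have h2 : g (g^[s - 1] j0) = g^[s] j0 := by
          have h3 := (Function.iterate_succ_apply' g (s - 1) j0).symm
          rw [h3]
          congr 1
          omega
        exact h2
    have hginj : ∀ c₁ ∈ C, ∀ c₂ ∈ C, g c₁ = g c₂ → c₁ = c₂ := by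
      intro c₁ h1 c₂ h2 he
      exact Finset.inj_on_of_surj_on_of_card_le (t := C) (fun c _ => g c)
        (fun c hc => hgC c hc) hsurj le_rfl h1 h2 he
    set z : N → M := fun i => if i ∈ C then x.1 (g i) else x.1 i with hz
    have hzinj : Function.Injective z := by
      intro c₁ c₂ he
      rw [hz] at he
      simp only at he
      by_cases h1 : c₁ ∈ C <;> by_cases h2 : c₂ ∈ C
      · rw [if_pos h1, if_pos h2] at he
        exact hginj c₁ h1 c₂ h2 (x.2 he)
      · rw [if_pos h1, if_neg h2] at he
        exact absurd (x.2 he ▸ hgC c₁ h1) h2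
      · rw [if_neg h1, if_pos h2] at he
        exact absurd ((x.2 he).symm ▸ hgC c₂ h2) h1
      · rw [if_neg h1, if_neg h2] at he
        exact x.2 he
    have hzt : ∀ c ∈ C, z c = t c := by
      intro c hc
      rw [hz]
      simp only [if_pos hc]
      exact hgspec c (hCA c hc)
    refine hx ⟨⟨z, hzinj⟩, ?_, ⟨j0, ?_⟩⟩
    · intro i
      show P.wpref i (z i) (x.1 i)
      by_cases hiC : i ∈ C
      · rw [hzt i hiC]
        exact Or.inl (htp i (hCA i hiC))
      · refine Or.inr ?_
        rw [hz]; simp only [if_neg hiC]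
    · show P.pref j0 (z j0) (x.1 j0)
      rw [hzt j0 hj0C]
      exact htp j0 hj0A

end Key

section Build
variable {N M : Type*} [Fintype N] [Fintype M] [Nonempty M] [Nonempty N]

/-- greedy construction of a serial-dictatorship order realizing a PE allocation -/
noncomputable def buildOrd (P : PrivProfile N M) (x : Alloc N M) : ℕ → N
  | k =>
    if h : ∃ i, i ∉ (Finset.range k).attach.image (fun j => buildOrd P x j.1) ∧
        ∀ w, P.pref i w (x.1 i) →
          ∃ j ∈ (Finset.range k).attach.image (fun j => buildOrd P x j.1), x.1 j = w
    then h.choose else Classical.arbitrary N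
termination_by k => k
decreasing_by all_goals exact Finset.mem_range.mp j.2

lemma attach_image_eq (P : PrivProfile N M) (x : Alloc N M) (k : ℕ) :
    (Finset.range k).attach.image (fun j => buildOrd P x j.1) =
      (Finset.range k).image (buildOrd P x) := by
  ext m
  simp only [Finset.mem_image, Finset.mem_attach, true_and, Subtype.exists, Finset.mem_range]
  constructor
  · rintro ⟨a, ha, rfl⟩; exact ⟨a, ha, rfl⟩
  · rintro ⟨a, ha, rfl⟩; exact ⟨a, ha, rfl⟩

lemma buildOrd_spec (P : PrivProfile N M) (x : Alloc N M) (hx : x ∈ P.PE)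
    (k : ℕ) (hk : k < Fintype.card N) :
    buildOrd P x k ∉ (Finset.range k).image (buildOrd P x) ∧
      ∀ w, P.pref (buildOrd P x k) w (x.1 (buildOrd P x k)) →
        ∃ j ∈ (Finset.range k).image (buildOrd P x), x.1 j = w := by
  have hA : (Finset.range k).image (buildOrd P x) ≠ Finset.univ := by
    intro he
    have h1 : ((Finset.range k).image (buildOrd P x)).card ≤ k :=
      le_trans Finset.card_image_le (le_of_eq (Finset.card_range k))
    rw [he, Finset.card_univ] at h1
    omega
  have h0 := exists_next P x hx _ hA
  rw [← attach_image_eq] at h0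
  have heq : buildOrd P x k = h0.choose := by
    rw [buildOrd, dif_pos h0]
  have hspec := h0.choose_spec
  rw [← heq, attach_image_eq] at hspec
  exact hspec

lemma buildOrd_injOn (P : PrivProfile N M) (x : Alloc N M) (hx : x ∈ P.PE)
    {j k : ℕ} (hjk : j < k) (hk : k < Fintype.card N) :
    buildOrd P x j ≠ buildOrd P x k := by
  intro he
  exact (buildOrd_spec P x hx k hk).1
    (Finset.mem_image.2 ⟨j, Finset.mem_range.2 hjk, he⟩)

/-- every PE allocation is a greedy (serial dictatorship) outcome -/
lemma PE_eq_pick (P : PrivProfile N M) (hNM : Fintype.card N ≤ Fintype.card M)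
    (x : Alloc N M) (hx : x ∈ P.PE) (k : ℕ) (hk : k < Fintype.card N) :
    P.pick (buildOrd P x) k = x.1 (buildOrd P x k) := by
  induction k using Nat.strong_induction_on with
  | _ k ih =>
  set f := buildOrd P x with hfdef
  have himg : (Finset.range k).image (P.pick f) = (Finset.range k).image (x.1 ∘ f) := by
    apply Finset.image_congr
    intro j hj
    rw [Finset.coe_range, Set.mem_Iio] at hj
    exact ih j hj (lt_trans hj hk)
  have hkM : k < Fintype.card M := lt_of_lt_of_le hk hNM
  have hxmem : x.1 (f k) ∈ Finset.univ \ (Finset.range k).image (P.pick f) := by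
    rw [himg, Finset.mem_sdiff]
    refine ⟨Finset.mem_univ _, ?_⟩
    intro hmem
    obtain ⟨j, hj, hje⟩ := Finset.mem_image.1 hmem
    exact buildOrd_injOn P x hx (Finset.mem_range.1 hj) hk (x.2 hje)
  by_contra hne
  have hpickmem := P.pick_mem f k hkM
  -- pick k is not preferred-over by x (f k):  x (f k) ∈ remaining, pick is top
  have h1 : ¬ P.pref (f k) (x.1 (f k)) (P.pick f k) := by
    apply P.pick_not_pref f k hkM
    rw [Finset.mem_sdiff] at hxmem
    exact hxmem.2
  have h2 : P.pref (f k) (P.pick f k) (x.1 (f k)) := by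
    rcases P.total (f k) (P.pick f k) (x.1 (f k)) hne with h | h
    · exact h
    · exact absurd h h1
  obtain ⟨j, hj, hje⟩ := (buildOrd_spec P x hx k hk).2 (P.pick f k) h2
  obtain ⟨j', hj', rfl⟩ := Finset.mem_image.1 hj
  have : P.pick f k ∈ (Finset.range k).image (P.pick f) := by
    rw [himg]
    exact Finset.mem_image.2 ⟨j', hj', hje⟩
  rw [Finset.mem_sdiff] at hpickmem
  exact hpickmem.2 this

end Build

section Main
variable {N M : Type*} [Fintype N] [Fintype M]

lemma pref_of_rank_lt (P : PrivProfile N M) {i : N} {a b : M}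
    (h : P.rank i a < P.rank i b) : P.pref i a b := by
  rcases P.wpref_of_rank_le (le_of_lt h) with h1 | h1
  · exact h1
  · rw [h1] at h; omega

lemma PE_nonempty (P : PrivProfile N M) (hNM : Fintype.card N ≤ Fintype.card M) :
    ∃ x : Alloc N M, x ∈ P.PE := by
  obtain ⟨e⟩ := Function.Embedding.nonempty_of_card_le hNM
  have : Nonempty (Alloc N M) := ⟨⟨e, e.injective⟩⟩
  haveI : Fintype (Alloc N M) := Fintype.ofFinite _
  obtain ⟨x, _, hmin⟩ := Finset.exists_min_image (Finset.univ : Finset (Alloc N M))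
    (fun x => ∑ i, P.rank i (x.1 i)) ⟨Classical.arbitrary _, Finset.mem_univ _⟩
  refine ⟨x, ?_⟩
  rintro ⟨z, hz, j, hj⟩
  have hlt : ∑ i, P.rank i (z.1 i) < ∑ i, P.rank i (x.1 i) := by
    apply Finset.sum_lt_sum
    · exact fun i _ => P.rank_le_of_wpref (hz i)
    · exact ⟨j, Finset.mem_univ _, P.rank_lt_of_pref hj⟩
  exact absurd (hmin z (Finset.mem_univ _)) (not_le.2 hlt)

lemma pos_surj (pos : N → ℕ) (hinj : Function.Injective pos)
    (hlt : ∀ i, pos i < Fintype.card N) :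
    ∀ k < Fintype.card N, ∃ i, pos i = k := by
  intro k hk
  have hsub : Finset.univ.image pos ⊆ Finset.range (Fintype.card N) := by
    intro m hm
    obtain ⟨i, _, rfl⟩ := Finset.mem_image.1 hm
    exact Finset.mem_range.2 (hlt i)
  have hcard : (Finset.range (Fintype.card N)).card ≤ (Finset.univ.image pos).card := by
    rw [Finset.card_range, Finset.card_image_of_injective _ hinj, Finset.card_univ]
  have := Finset.eq_of_subset_of_card_le hsub hcard
  have hk2 : k ∈ Finset.univ.image pos := by
    rw [this]
    exact Finset.mem_range.2 hk
  obtain ⟨i, _, he⟩ := Finset.mem_image.1 hk2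
  exact ⟨i, he⟩

end Main

/-- (with `N ≤ M`) every private profile in which all individuals'
favorite widgets are pairwise distinct is a ⊵-upper bound among private
profiles; and every private profile admitting a common set of top-`N` widgets
(ranked no worse than `N`-th by everyone, with coinciding restricted
preferences) is a ⊵-lower bound among private profiles. -/
theorem stmt_7 {N M : Type*} [Fintype N] [Fintype M]
    (hNM : Fintype.card N ≤ Fintype.card M) :
    (∀ Pbar : PrivProfile N M,
      (∃ xbar : N → M, Function.Injective xbar ∧ ∀ i : N, Pbar.rank i (xbar i) = 1) →
      ∀ P' : PrivProfile N M, Pbar.Dom P') ∧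
    (∀ Pund : PrivProfile N M,
      (∃ MN : Finset M, MN.card = Fintype.card N ∧
        (∀ i : N, ∀ z ∈ MN, Pund.rank i z ≤ Fintype.card N) ∧
        (∀ i j : N, ∀ z ∈ MN, ∀ w ∈ MN, (Pund.pref i z w ↔ Pund.pref j z w))) →
      ∀ P' : PrivProfile N M, P'.Dom Pund) := by
  constructor
  · -- PART 1
    rintro Pbar ⟨xbar, hinj, hrank⟩ P'
    have htop : ∀ i k, ¬ Pbar.pref i k (xbar i) := fun i => (Pbar.rank_eq_one_iff).1 (hrank i)
    set xb : Alloc N M := ⟨xbar, hinj⟩ with hxb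
    have hsub : ∀ x ∈ Pbar.PE, x = xb := by
      intro x hx
      by_contra hne
      have hfne : ∃ j, x.1 j ≠ xbar j := by
        by_contra hc
        push_neg at hc
        exact hne (Subtype.ext (funext hc))
      obtain ⟨j, hj⟩ := hfne
      refine hx ⟨xb, ?_, ⟨j, ?_⟩⟩
      · intro i
        rcases eq_or_ne (xbar i) (x.1 i) with he | hne2
        · exact Or.inr he
        · rcases Pbar.total i (xbar i) (x.1 i) hne2 with h | h
          · exact Or.inl h
          · exact absurd h (htop i _)
      · rcases Pbar.total j (xbar j) (x.1 j) (Ne.symm hj) with h | h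
        · exact h
        · exact absurd h (htop j _)
    obtain ⟨x0, hx0⟩ := PE_nonempty P' hNM
    refine ⟨fun _ => xb, ?_, ?_, ?_⟩
    · intro y _
      rintro ⟨z, hz, j, hj⟩
      exact htop j _ hj
    · intro y hy
      exact ⟨x0, hx0, (hsub y hy).symm⟩
    · intro x _ i
      have h1 : Pbar.rank i (xbar i) = 1 := hrank i
      calc Pbar.rank i (((fun (_ : Alloc N M) => xb) x).1 i) = 1 := h1
      _ ≤ P'.rank i (x.1 i) := P'.one_le_rank i _
  · -- PART 2
    rintro Pund ⟨MN, hcard, hrle, hcommon⟩ P'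
    by_cases hNe : Nonempty N
    case neg =>
      -- N empty: everything is trivially PE
      haveI : IsEmpty N := not_nonempty_iff.1 hNe
      have hPE : ∀ (P : PrivProfile N M) (x : Alloc N M), x ∈ P.PE := by
        rintro P x ⟨z, hz, j, hj⟩
        exact isEmptyElim j
      exact ⟨id, fun y _ => hPE P' y, fun y _ => ⟨y, hPE Pund y, rfl⟩,
        fun x _ i => isEmptyElim i⟩
    case pos =>
    haveI : Nonempty M := Fintype.card_pos_iff.1 (lt_of_lt_of_le (Fintype.card_pos_iff.2 hNe) hNM)
    set n := Fintype.card N with hn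
    set i0 : N := Classical.arbitrary N with hi0
    -- L1 : membership in MN is equivalent to rank ≤ n
    have hL1 : ∀ (i : N) (m : M), m ∈ MN ↔ Pund.rank i m ≤ n := by
      intro i m
      constructor
      · exact fun hm => hrle i m hm
      · intro hm
        have hMNeq : MN = Finset.univ.filter (fun m => Pund.rank i m ≤ n) := by
          apply Finset.eq_of_subset_of_card_le
          · intro a ha
            exact Finset.mem_filter.2 ⟨Finset.mem_univ _, hrle i a ha⟩
          · have hinj2 : ∀ a ∈ Finset.univ.filter (fun m => Pund.rank i m ≤ n),
                ∀ b ∈ Finset.univ.filter (fun m => Pund.rank i m ≤ n),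
                Pund.rank i a = Pund.rank i b → a = b :=
              fun a _ b _ h => Pund.eq_of_rank_eq h
            have hmaps : ∀ a ∈ Finset.univ.filter (fun m => Pund.rank i m ≤ n),
                Pund.rank i a ∈ Finset.Icc 1 n := by
              intro a ha
              rw [Finset.mem_filter] at ha
              exact Finset.mem_Icc.2 ⟨Pund.one_le_rank i a, ha.2⟩
            have := Finset.card_le_card_of_injOn _ hmaps hinj2
            rw [Nat.card_Icc] at this
            omega
        rw [hMNeq]
        exact Finset.mem_filter.2 ⟨Finset.mem_univ _, hm⟩
    -- L2 : common ranks on MN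
    have hL2 : ∀ m ∈ MN, ∀ i i' : N, Pund.rank i m = Pund.rank i' m := by
      intro m hm i i'
      have hset : {k : M | Pund.pref i k m} = {k : M | Pund.pref i' k m} := by
        ext k
        simp only [Set.mem_setOf_eq]
        constructor
        · intro hk
          have hkMN : k ∈ MN := by
            rw [hL1 i]
            have := Pund.rank_lt_of_pref hk
            have h2 := (hL1 i m).1 hm
            omega
          exact (hcommon i i' k hkMN m hm).1 hk
        · intro hk
          have hkMN : k ∈ MN := by
            rw [hL1 i']
            have := Pund.rank_lt_of_pref hk
            have h2 := (hL1 i' m).1 hm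
            omega
          exact (hcommon i i' k hkMN m hm).2 hk
      unfold PrivProfile.rank
      rw [hset]
    -- L3 : cross-individual rank injectivity on MN
    have hL3 : ∀ m ∈ MN, ∀ m' ∈ MN, ∀ i i' : N,
        Pund.rank i m = Pund.rank i' m' → m = m' := by
      intro m hm m' hm' i i' h
      apply Pund.eq_of_rank_eq (i := i')
      rw [← hL2 m hm i i']
      exact h
    -- L4 : every allocation into MN is PE for Pund
    have hL4 : ∀ y : Alloc N M, (∀ i, y.1 i ∈ MN) → y ∈ Pund.PE := by
      intro y hy
      rintro ⟨z, hz, j, hj⟩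
      have hzMN : ∀ i, z.1 i ∈ MN := by
        intro i
        rw [hL1 i]
        have h1 := Pund.rank_le_of_wpref (hz i)
        have h2 := (hL1 i (y.1 i)).1 (hy i)
        omega
      have himg : ∀ (v : Alloc N M), (∀ i, v.1 i ∈ MN) →
          Finset.univ.image v.1 = MN := by
        intro v hv
        apply Finset.eq_of_subset_of_card_le
        · intro m hm
          obtain ⟨i, _, rfl⟩ := Finset.mem_image.1 hm
          exact hv i
        · rw [Finset.card_image_of_injective _ v.2, Finset.card_univ, hcard]
      have hsum : ∀ (v : Alloc N M), (∀ i, v.1 i ∈ MN) →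
          ∑ i, Pund.rank i0 (v.1 i) = ∑ m ∈ MN, Pund.rank i0 m := by
        intro v hv
        rw [← himg v hv]
        exact (Finset.sum_image (fun a _ b _ h => v.2 h)).symm
      have hle : ∀ i, Pund.rank i0 (z.1 i) ≤ Pund.rank i0 (y.1 i) := by
        intro i
        have h1 := Pund.rank_le_of_wpref (hz i)
        rw [← hL2 _ (hzMN i) i i0, ← hL2 _ (hy i) i i0]
        exact h1
      have hstrict : Pund.rank i0 (z.1 j) < Pund.rank i0 (y.1 j) := by
        have h1 := Pund.rank_lt_of_pref hj
        rw [← hL2 _ (hzMN j) j i0, ← hL2 _ (hy j) j i0]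
        exact h1
      have hlt : ∑ i, Pund.rank i0 (z.1 i) < ∑ i, Pund.rank i0 (y.1 i) :=
        Finset.sum_lt_sum (fun i _ => hle i) ⟨j, Finset.mem_univ _, hstrict⟩
      rw [hsum z hzMN, hsum y hy] at hlt
      omega
    -- L5 : every PE allocation for Pund maps into MN
    have hL5 : ∀ y, y ∈ Pund.PE → ∀ i, y.1 i ∈ MN := by
      intro y hy i'
      by_contra hc
      have hne : Finset.univ.image y.1 ≠ MN := by
        intro he
        exact hc (he ▸ Finset.mem_image.2 ⟨i', Finset.mem_univ _, rfl⟩)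
      have hnotsub : ∃ m ∈ MN, m ∉ Finset.univ.image y.1 := by
        by_contra hall
        push_neg at hall
        have : MN ⊆ Finset.univ.image y.1 := hall
        have hcard2 : (Finset.univ.image y.1).card ≤ MN.card := by
          rw [Finset.card_image_of_injective _ y.2, Finset.card_univ, hcard]
        exact hne (Finset.eq_of_subset_of_card_le this hcard2).symm
      obtain ⟨m, hmMN, hmnot⟩ := hnotsub
      have hinj2 : Function.Injective (Function.update y.1 i' m) := by
        intro a b hab
        rw [Function.update_apply, Function.update_apply] at hab
        by_cases ha : a = i' <;> by_cases hb : b = i'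
        · rw [ha, hb]
        · rw [if_pos ha, if_neg hb] at hab
          exact absurd (Finset.mem_image.2 ⟨b, Finset.mem_univ _, hab.symm⟩) hmnot
        · rw [if_neg ha, if_pos hb] at hab
          exact absurd (Finset.mem_image.2 ⟨a, Finset.mem_univ _, hab⟩) hmnot
        · rw [if_neg ha, if_neg hb] at hab
          exact y.2 hab
      have hpref : Pund.pref i' m (y.1 i') := by
        apply pref_of_rank_lt
        have h1 : Pund.rank i' m ≤ n := (hL1 i' m).1 hmMN
        have h2 : ¬ Pund.rank i' (y.1 i') ≤ n := fun h => hc ((hL1 i' _).2 h)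
        omega
      refine hy ⟨⟨Function.update y.1 i' m, hinj2⟩, ?_, ⟨i', ?_⟩⟩
      · intro i
        show Pund.wpref i (Function.update y.1 i' m i) (y.1 i)
        rcases eq_or_ne i i' with rfl | hne2
        · rw [Function.update_self]
          exact Or.inl hpref
        · rw [Function.update_of_ne hne2]
          exact Or.inr rfl
      · show Pund.pref i' (Function.update y.1 i' m i') (y.1 i')
        rw [Function.update_self]
        exact hpref
    -- serial dictatorship machinery
    set posP : Alloc N M → N → ℕ := fun y i => Pund.rank i (y.1 i) - 1 with hposP
    set forder : Alloc N M → ℕ → N := fun y k =>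
      if h : ∃ i, Pund.rank i (y.1 i) = k + 1 then h.choose
      else Classical.arbitrary N with hforder
    have hkey : ∀ y : Alloc N M, (∀ i, y.1 i ∈ MN) →
        (∀ i, posP y i < n) ∧ (∀ i, forder y (posP y i) = i) := by
      intro y hy
      have hlt : ∀ i, posP y i < n := by
        intro i
        have h1 := (hL1 i (y.1 i)).1 (hy i)
        have h2 := Pund.one_le_rank i (y.1 i)
        show Pund.rank i (y.1 i) - 1 < n
        omega
      refine ⟨hlt, ?_⟩
      intro i
      have hex : ∃ i', Pund.rank i' (y.1 i') = (posP y i) + 1 := by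
        refine ⟨i, ?_⟩
        have h2 := Pund.one_le_rank i (y.1 i)
        show Pund.rank i (y.1 i) = Pund.rank i (y.1 i) - 1 + 1
        omega
      show (if h : ∃ i', Pund.rank i' (y.1 i') = (posP y i) + 1 then h.choose
        else Classical.arbitrary N) = i
      rw [dif_pos hex]
      have hcs := hex.choose_spec
      have h2 := Pund.one_le_rank i (y.1 i)
      have h3 : Pund.rank hex.choose (y.1 hex.choose) = Pund.rank i (y.1 i) := by
        rw [hcs]
        show Pund.rank i (y.1 i) - 1 + 1 = Pund.rank i (y.1 i)
        omega
      have h4 : y.1 hex.choose = y.1 i := hL3 _ (hy _) _ (hy i) _ _ h3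
      exact y.2 h4
    have hposinj : ∀ y : Alloc N M, (∀ i, y.1 i ∈ MN) → Function.Injective (posP y) := by
      intro y hy a b hab
      have h1 := Pund.one_le_rank a (y.1 a)
      have h2 := Pund.one_le_rank b (y.1 b)
      have hab2 : Pund.rank a (y.1 a) - 1 = Pund.rank b (y.1 b) - 1 := hab
      have h3 : Pund.rank a (y.1 a) = Pund.rank b (y.1 b) := by omega
      exact y.2 (hL3 _ (hy a) _ (hy b) _ _ h3)
    have hpf : ∀ y : Alloc N M, (∀ i, y.1 i ∈ MN) →
        ∀ k, k < n → posP y (forder y k) = k := by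
      intro y hy k hk
      obtain ⟨i, rfl⟩ := pos_surj (posP y) (hposinj y hy) (hkey y hy).1 k hk
      rw [(hkey y hy).2 i]
    set ψ : Alloc N M → Alloc N M := fun y =>
      if h : Function.Injective (fun i => P'.pick (forder y) (posP y i)) then ⟨_, h⟩
      else y with hψ
    have hψval : ∀ y : Alloc N M, ∀ hy : (∀ i, y.1 i ∈ MN),
        ψ y = ⟨fun i => P'.pick (forder y) (posP y i),
          sd_inj P' hNM (forder y) (posP y) (hkey y hy).2 (hkey y hy).1⟩ := by
      intro y hy
      have hinj := sd_inj P' hNM (forder y) (posP y) (hkey y hy).2 (hkey y hy).1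
      show (if h : Function.Injective (fun i => P'.pick (forder y) (posP y i)) then
        (⟨_, h⟩ : Alloc N M) else y) = _
      rw [dif_pos hinj]
    refine ⟨ψ, ?_, ?_, ?_⟩
    · -- maps to
      intro y hy'
      have hy := hL5 y hy'
      rw [hψval y hy]
      exact sd_mem_PE P' hNM (forder y) (posP y) (hkey y hy).2 (hkey y hy).1 (hpf y hy)
    · -- surjectivity
      intro x hx
      set f := buildOrd P' x with hfb
      have hfinj : ∀ {j k : ℕ}, j < k → k < n → f j ≠ f k :=
        fun hjk hk => buildOrd_injOn P' x hx hjk hk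
      have hfinj' : ∀ {j k : ℕ}, j < n → k < n → f j = f k → j = k := by
        intro j k hj hk he
        rcases lt_trichotomy j k with h | h | h
        · exact absurd he (hfinj h hk)
        · exact h
        · exact absurd he.symm (hfinj h hj)
      have himgf : ∀ i : N, ∃ k, k < n ∧ f k = i := by
        intro i
        have hcardim : ((Finset.range n).image f).card = n := by
          rw [Finset.card_image_of_injOn, Finset.card_range]
          intro a ha b hb he
          rw [Finset.coe_range, Set.mem_Iio] at ha hb
          exact hfinj' ha hb he
        have : (Finset.range n).image f = Finset.univ := by
          apply Finset.eq_of_subset_of_card_le (Finset.subset_univ _)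
          rw [Finset.card_univ, hcardim]
        have hi : i ∈ (Finset.range n).image f := by rw [this]; exact Finset.mem_univ i
        obtain ⟨k, hk, he⟩ := Finset.mem_image.1 hi
        exact ⟨k, Finset.mem_range.1 hk, he⟩
      choose posx hposx1 hposx2 using himgf
      have hposxinj : Function.Injective posx := by
        intro a b hab
        rw [← hposx2 a, ← hposx2 b, hab]
      have hsurjMN : ∀ b ∈ Finset.range n, ∃ m, ∃ _ : m ∈ MN, b = Pund.rank i0 m - 1 := by
        apply Finset.surj_on_of_inj_on_of_card_le (fun m _ => Pund.rank i0 m - 1)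
        · intro m hm
          have h1 := (hL1 i0 m).1 hm
          have h2 := Pund.one_le_rank i0 m
          exact Finset.mem_range.2 (by omega)
        · intro a b ha hb hab
          have h1 := Pund.one_le_rank i0 a
          have h2 := Pund.one_le_rank i0 b
          have : Pund.rank i0 a = Pund.rank i0 b := by omega
          exact Pund.eq_of_rank_eq this
        · rw [Finset.card_range, hcard]
      choose yfun hymem hyrank using
        fun i => hsurjMN (posx i) (Finset.mem_range.2 (hposx1 i))
      have hyinj : Function.Injective yfun := by
        intro a b hab
        apply hposxinj
        rw [hyrank a, hyrank b, hab]
      set ya : Alloc N M := ⟨yfun, hyinj⟩ with hya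
      have hyMN : ∀ i, ya.1 i ∈ MN := hymem
      have hyPE : ya ∈ Pund.PE := hL4 ya hyMN
      have hposeq : ∀ i, posP ya i = posx i := by
        intro i
        show Pund.rank i (yfun i) - 1 = posx i
        rw [hL2 _ (hymem i) i i0, ← hyrank i]
      have hfeq : ∀ k, k < n → forder ya k = f k := by
        intro k hk
        obtain ⟨i, hip⟩ := pos_surj posx hposxinj hposx1 k hk
        have h1 : posP ya i = k := by rw [hposeq i, hip]
        have h2 : forder ya k = i := by rw [← h1]; exact (hkey ya hyMN).2 i
        rw [h2, ← hip, hposx2 i]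
      have hfun : (fun i => P'.pick (forder ya) (posP ya i)) = x.1 := by
        funext i
        have h1 : P'.pick (forder ya) (posP ya i) = P'.pick f (posx i) := by
          rw [hposeq i]
          exact P'.pick_congr (forder ya) f (posx i)
            (fun j hj => hfeq j (lt_of_le_of_lt hj (hposx1 i)))
        have h4 := PE_eq_pick P' hNM x hx (posx i) (hposx1 i)
        rw [← hfb] at h4
        rw [h1, h4, hposx2 i]
      refine ⟨ya, hyPE, ?_⟩
      rw [hψval ya hyMN]
      exact Subtype.ext hfun
    · -- rank improvement
      intro x hx' i
      have hy := hL5 x hx'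
      rw [hψval x hy]
      have h1 : P'.rank (forder x (posP x i)) (P'.pick (forder x) (posP x i)) ≤ posP x i + 1 :=
        P'.rank_pick_le (forder x) (posP x i) (lt_of_lt_of_le ((hkey x hy).1 i) hNM)
      rw [(hkey x hy).2 i] at h1
      have h2 := Pund.one_le_rank i (x.1 i)
      have h3 : posP x i + 1 = Pund.rank i (x.1 i) := by
        show Pund.rank i (x.1 i) - 1 + 1 = Pund.rank i (x.1 i)
        omega
      calc P'.rank i ((⟨fun i => P'.pick (forder x) (posP x i), _⟩ : Alloc N M).1 i)
          = P'.rank i (P'.pick (forder x) (posP x i)) := rfl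
        _ ≤ posP x i + 1 := h1
        _ = Pund.rank i (x.1 i) := h3
end

section
/- Let P be a private preference profile and x ∈ PE(P) a Pareto efficient allocation. If i_1, ..., i_k are pairwise distinct individuals such that x_{i_{h+1}} ≻_{P_{i_h}} x_{i_h} for every h = 1, ..., k−1, then x_{i_k} ≻_{P_{i_k}} x_{i_1}. -/
/-- No cycles of envy: for a Pareto efficient allocation `x`, if
pairwise distinct individuals `ι 0, ι 1, ..., ι k` (with `k ≥ 1`) satisfy
`x_{ι (h+1)} ≻_{ι h} x_{ι h}` for `h = 0, ..., k - 1`, then the last individual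
strictly prefers her own widget to the first individual's widget. -/
theorem stmt_8 {N M : Type*} [Fintype N] [Fintype M]
    (hNM : Fintype.card N ≤ Fintype.card M) (P : PrivProfile N M)
    (x : Alloc N M) (hx : x ∈ P.PE)
    (k : ℕ) (hk : 1 ≤ k) (ι : Fin (k + 1) → N) (hι : Function.Injective ι)
    (hchain : ∀ h : Fin k, P.pref (ι h.castSucc) (x.1 (ι h.succ)) (x.1 (ι h.castSucc))) :
    P.pref (ι (Fin.last k)) (x.1 (ι (Fin.last k))) (x.1 (ι 0)) := by
  classical
  by_contra hne
  have hlast0 : ι (Fin.last k) ≠ ι 0 := by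
    intro h
    have := hι h
    have : (Fin.last k : Fin (k+1)).val = (0 : Fin (k+1)).val := by rw [this]
    simp [Fin.last] at this
    omega
  have hx0 : x.1 (ι (Fin.last k)) ≠ x.1 (ι 0) := fun h => hlast0 (x.2 h)
  have hpref0 : P.pref (ι (Fin.last k)) (x.1 (ι 0)) (x.1 (ι (Fin.last k))) := by
    rcases P.total _ _ _ hx0 with h | h
    · exact absurd h hne
    · exact h
  set π := (finRotate (k+1)).viaFintypeEmbedding ⟨ι, hι⟩ with hπ
  have hπι : ∀ j, π (ι j) = ι (j + 1) := by
    intro j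
    have := (finRotate (k+1)).viaFintypeEmbedding_apply_image ⟨ι, hι⟩ j
    simpa [finRotate_succ_apply] using this
  have hπout : ∀ n : N, (¬ ∃ j, ι j = n) → π n = n := by
    intro n hn
    have hr : n ∉ Set.range (⟨ι, hι⟩ : Fin (k+1) ↪ N) := by
      rintro ⟨j, hj⟩; exact hn ⟨j, hj⟩
    exact Equiv.Perm.viaFintypeEmbedding_apply_notMem_range (e := finRotate (k+1)) (f := (⟨ι, hι⟩ : Fin (k+1) ↪ N)) hr
  set z : Alloc N M := ⟨x.1 ∘ π, x.2.comp π.injective⟩ with hz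
  apply hx
  refine ⟨z, ?_, ?_⟩
  · intro i
    by_cases hi : ∃ j, ι j = i
    · obtain ⟨j, rfl⟩ := hi
      have hzj : z.1 (ι j) = x.1 (ι (j + 1)) := by
        simp [hz, hπι]
      rcases Fin.eq_castSucc_or_eq_last j with ⟨h, rfl⟩ | rfl
      · have hsucc : h.castSucc + 1 = h.succ := by
          ext
          simp [Fin.add_def, Fin.val_succ]
        rw [hzj, hsucc]
        exact Or.inl (hchain h)
      · have hlast : Fin.last k + 1 = 0 := by
          ext; simp [Fin.add_def]
        rw [hzj, hlast]
        exact Or.inl hpref0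
    · have : z.1 i = x.1 i := by simp [hz, hπout i hi]
      exact Or.inr this
  · refine ⟨ι 0, ?_⟩
    have h0 : Fin.castSucc (⟨0, hk⟩ : Fin k) = (0 : Fin (k+1)) := rfl
    have hz0 : z.1 (ι 0) = x.1 (ι (0 + 1)) := by simp [hz, hπι]
    have h01 : (0 : Fin (k+1)) + 1 = Fin.succ (⟨0, hk⟩ : Fin k) := by
      ext; simp [Fin.add_def]; omega
    rw [hz0, h01, ← h0]
    exact hchain ⟨0, hk⟩
end

section
/- Let P be a private preference profile with N individuals. For every Pareto efficient allocation x ∈ PE(P) and every individual i ∈ N, we have R(P_i, x_i) ≤ N, i.e., under any Pareto efficient allocation each individual receives a widget no worse than her N-th favorite. -/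
/-!
If individual `i` ranked `x i` below `N`, at least `N` widgets would be strictly better for her.
The other `N - 1` individuals occupy only `N - 1` widgets, so one of these better widgets is
unassigned, and giving it to `i` is a Pareto improvement.
-/

open Function Set

theorem Function.Injective.update_of_notMem_range {α β : Type*} [DecidableEq α] {f : α → β}
    (hf : Injective f) (a : α) {b : β} (hb : b ∉ range f) : Injective (update f a b) := by
  intro u v huv
  by_cases hu : u = a <;> by_cases hv : v = a
  · exact hu.trans hv.symm
  · subst hu
    rw [update_self, update_of_ne hv] at huv
    exact absurd ⟨v, huv.symm⟩ hb
  · subst hv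
    rw [update_self, update_of_ne hu] at huv
    exact absurd ⟨u, huv⟩ hb
  · rw [update_of_ne hu, update_of_ne hv] at huv
    exact hf huv

theorem Function.Injective.exists_mem_notMem_range {α β : Type*} [Finite α] {f : α → β}
    (hf : Injective f) {S : Set β} {a : α} (ha : f a ∉ S) (hS : Nat.card α ≤ S.ncard) :
    ∃ b ∈ S, b ∉ range f := by
  have hlt : (range f \ {f a}).ncard < S.ncard := by
    rw [ncard_sdiff_singleton_of_mem (mem_range_self a), ncard_range_of_injective hf]
    have : Nonempty α := ⟨a⟩
    have : 0 < Nat.card α := Nat.card_pos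
    omega
  obtain ⟨b, hbS, hb⟩ := exists_mem_notMem_of_ncard_lt_ncard hlt
  refine ⟨b, hbS, fun hbf => hb ⟨hbf, ?_⟩⟩
  rintro rfl
  exact ha hbS

namespace PrivProfile

variable {N M : Type*}

theorem notMem_PE_of_pref_of_notMem_range (P : PrivProfile N M) (x : Alloc N M) {i : N} {m : M}
    (hm : P.pref i m (x.1 i)) (hfree : m ∉ range x.1) : x ∉ P.PE := by
  classical
  intro hx
  refine hx ⟨⟨update x.1 i m, x.2.update_of_notMem_range i hfree⟩, fun j => ?_, i, by simpa⟩
  rcases eq_or_ne j i with rfl | hj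
  · simpa [wpref] using Or.inl hm
  · exact Or.inr (update_of_ne hj _ _)

end PrivProfile

theorem stmt_10_general {N M : Type*} [Fintype N]
    (P : PrivProfile N M)
    (x : Alloc N M) (hx : x ∈ P.PE) (i : N) :
    P.rank i (x.1 i) ≤ Fintype.card N := by
  by_contra! h
  have hS : Nat.card N ≤ {k | P.pref i k (x.1 i)}.ncard := by
    rw [PrivProfile.rank] at h
    rw [Nat.card_eq_fintype_card]
    omega
  obtain ⟨m, hm, hfree⟩ :=
    x.2.exists_mem_notMem_range (S := {k | P.pref i k (x.1 i)}) (P.irrefl i _) hS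
  exact P.notMem_PE_of_pref_of_notMem_range x hm hfree hx

/-- under any Pareto efficient allocation, each individual
receives a widget no worse than her `N`-th favorite: `R(P_i, x_i) ≤ N`. -/
theorem stmt_10 {N M : Type*} [Fintype N] [Fintype M]
    (hNM : Fintype.card N ≤ Fintype.card M) (P : PrivProfile N M)
    (x : Alloc N M) (hx : x ∈ P.PE) (i : N) :
    P.rank i (x.1 i) ≤ Fintype.card N :=
  stmt_10_general P x hx i
end

section
/- Let P be a private preference profile with N individuals. For every Pareto efficient allocation x ∈ PE(P) and every k ∈ {1, ..., N}, at least k individuals are allocated widgets weakly better than their k-th favorite widget: #{i ∈ N : R(P_i, x_i) ≤ k} ≥ k. -/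
section Aux

variable {N M : Type*}

lemma aux_rank_lt [Fintype M] (P : PrivProfile N M) (i : N) {a b : M}
    (h : P.pref i a b) : P.rank i a < P.rank i b := by
  have hsub : {m : M | P.pref i m a} ⊆ {m : M | P.pref i m b} :=
    fun m hm => P.trans i m a b hm h
  have hss : {m : M | P.pref i m a} ⊂ {m : M | P.pref i m b} := by
    rw [Set.ssubset_def]
    exact ⟨hsub, fun h2 => P.irrefl i a (h2 h)⟩
  have hlt := Set.ncard_lt_ncard hss (Set.toFinite _)
  simp only [PrivProfile.rank]
  omega

lemma aux_pref_of_lt [Fintype M] (P : PrivProfile N M) (i : N) {a b : M}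
    (h : P.rank i a < P.rank i b) : P.pref i a b := by
  have hne : a ≠ b := fun e => by subst e; exact lt_irrefl _ h
  rcases P.total i a b hne with hp | hp
  · exact hp
  · have := aux_rank_lt P i hp; omega

lemma aux_rank_le [Fintype M] (P : PrivProfile N M) (i : N) (m : M) :
    P.rank i m ≤ Fintype.card M := by
  have hnm : m ∉ {k : M | P.pref i k m} := P.irrefl i m
  have h1 := Set.ncard_insert_of_notMem hnm (Set.toFinite _)
  have h2 : (insert m {k : M | P.pref i k m}).ncard ≤ Fintype.card M := by
    have := Set.ncard_le_ncard (Set.subset_univ (insert m {k : M | P.pref i k m}))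
      (Set.toFinite _)
    simpa [Set.ncard_univ, Nat.card_eq_fintype_card] using this
  simp only [PrivProfile.rank]
  omega

lemma aux_rank_inj [Fintype M] (P : PrivProfile N M) (i : N) :
    Function.Injective (P.rank i) := by
  intro a b h
  by_contra hne
  rcases P.total i a b hne with hp | hp
  · have := aux_rank_lt P i hp; omega
  · have := aux_rank_lt P i hp; omega

open Finset in
lemma aux_topk [Fintype M] (P : PrivProfile N M) (i : N) {k : ℕ}
    (hk : k ≤ Fintype.card M) :
    k ≤ (Finset.univ.filter (fun m => P.rank i m ≤ k)).card := by
  classical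
  set img := Finset.univ.image (P.rank i) with himg
  have hcard : img.card = Fintype.card M := by
    rw [himg, Finset.card_image_of_injective _ (aux_rank_inj P i), Finset.card_univ]
  have hsub : img ⊆ Finset.Icc 1 (Fintype.card M) := by
    intro r hr
    simp only [himg, Finset.mem_image] at hr
    obtain ⟨m, -, rfl⟩ := hr
    rw [Finset.mem_Icc]
    exact ⟨by simp [PrivProfile.rank], aux_rank_le P i m⟩
  have heq : img = Finset.Icc 1 (Fintype.card M) :=
    Finset.eq_of_subset_of_card_le hsub (by rw [hcard, Nat.card_Icc]; omega)
  have hsurj : Set.SurjOn (P.rank i)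
      ↑(Finset.univ.filter (fun m => P.rank i m ≤ k)) ↑(Finset.Icc 1 k) := by
    intro r hr
    simp only [Finset.coe_Icc, Set.mem_Icc] at hr
    have hrM : r ∈ img := by
      rw [heq, Finset.mem_Icc]; exact ⟨hr.1, hr.2.trans hk⟩
    simp only [himg, Finset.mem_image] at hrM
    obtain ⟨m, -, hm⟩ := hrM
    exact ⟨m, by simp [Finset.mem_filter, hm, hr.2], hm⟩
  have := Finset.card_le_card_of_surjOn _ hsurj
  simpa [Nat.card_Icc] using this

end Aux
/-- for a Pareto efficient allocation `x` and any
`k ∈ {1, ..., N}`, at least `k` individuals are allocated widgets weakly better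
than their `k`-th favorite widget. -/
theorem stmt_11 {N M : Type*} [Fintype N] [Fintype M]
    (hNM : Fintype.card N ≤ Fintype.card M) (P : PrivProfile N M)
    (x : Alloc N M) (hx : x ∈ P.PE) (k : ℕ) (hk1 : 1 ≤ k)
    (hkN : k ≤ Fintype.card N) :
    k ≤ {i : N | P.rank i (x.1 i) ≤ k}.ncard := by
  classical
  by_contra hcon
  push_neg at hcon
  set S : Finset N := Finset.univ.filter (fun i => P.rank i (x.1 i) ≤ k) with hSdef
  have hset : {i : N | P.rank i (x.1 i) ≤ k} = ↑S := by
    ext i; simp [hSdef]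
  rw [hset, Set.ncard_coe_finset] at hcon
  have hkM : k ≤ Fintype.card M := hkN.trans hNM
  have hT : ∀ i : N, i ∉ S → k < P.rank i (x.1 i) := by
    intro i hi
    simp only [hSdef, Finset.mem_filter, Finset.mem_univ, true_and, not_le] at hi
    exact hi
  -- choose for each i ∉ S a top-k widget not allocated to S
  have hchoice : ∀ i : N, ∃ w : M,
      i ∉ S → (w ∉ S.image x.1 ∧ P.pref i w (x.1 i)) := by
    intro i
    by_cases hi : i ∈ S
    · exact ⟨x.1 i, fun h => absurd hi h⟩
    · have htop := aux_topk P i hkM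
      have himle : (S.image x.1).card ≤ S.card := Finset.card_image_le
      have hns : ¬ ((Finset.univ.filter (fun m => P.rank i m ≤ k)) ⊆ S.image x.1) := by
        intro hs
        have := Finset.card_le_card hs
        omega
      obtain ⟨w, hwA, hwB⟩ := Finset.not_subset.mp hns
      simp only [Finset.mem_filter, Finset.mem_univ, true_and] at hwA
      exact ⟨w, fun _ => ⟨hwB, aux_pref_of_lt P i (lt_of_le_of_lt hwA (hT i hi))⟩⟩
  choose w hw using hchoice
  by_cases hC : ∃ i : N, i ∉ S ∧ w i ∉ Set.range x.1
  · -- Case 1: an unallocated improving widget; give it to i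
    obtain ⟨i, hiS, hir⟩ := hC
    have hwi := hw i hiS
    have hzinj : Function.Injective (Function.update x.1 i (w i)) := by
      intro a b hab
      by_cases ha : a = i <;> by_cases hb : b = i
      · rw [ha, hb]
      · rw [ha, Function.update_self, Function.update_of_ne hb] at hab
        exact absurd ⟨b, hab.symm⟩ hir
      · rw [hb, Function.update_self, Function.update_of_ne ha] at hab
        exact absurd ⟨a, hab⟩ hir
      · rw [Function.update_of_ne ha, Function.update_of_ne hb] at hab
        exact x.2 hab
    refine hx ⟨⟨Function.update x.1 i (w i), hzinj⟩, fun j => ?_, ⟨i, ?_⟩⟩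
    · by_cases hj : j = i
      · subst hj; left; simpa using hwi.2
      · right; simp [Function.update_of_ne hj]
    · simpa using hwi.2
  · -- Case 2: every improving widget is allocated; build a trading cycle
    push_neg at hC
    have hf0 : ∀ i : N, ∃ j : N, i ∉ S → x.1 j = w i := by
      intro i
      by_cases hi : i ∈ S
      · exact ⟨i, fun h => absurd hi h⟩
      · obtain ⟨j, hj⟩ := hC i hi
        exact ⟨j, fun _ => hj⟩
    choose f hf using hf0
    have hfT : ∀ i : N, i ∉ S → f i ∉ S := by
      intro i hi hfi
      exact (hw i hi).1 (Finset.mem_image.mpr ⟨f i, hfi, hf i hi⟩)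
    have hfpref : ∀ i : N, i ∉ S → P.pref i (x.1 (f i)) (x.1 i) := by
      intro i hi
      rw [hf i hi]
      exact (hw i hi).2
    -- S ≠ univ, pick a starting point
    have hSne : S ≠ Finset.univ := by
      intro h
      rw [h, Finset.card_univ] at hcon
      omega
    obtain ⟨i0, hi0⟩ : ∃ i0 : N, i0 ∉ S := by
      by_contra h
      push_neg at h
      exact hSne (Finset.eq_univ_iff_forall.mpr h)
    have hiter : ∀ m : ℕ, f^[m] i0 ∉ S := by
      intro m
      induction m with
      | zero => exact hi0
      | succ m ih => rw [Function.iterate_succ_apply']; exact hfT _ ih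
    -- pigeonhole gives a cycle
    obtain ⟨a, b, hab, heqab⟩ : ∃ a b : Fin (Fintype.card N + 1), a ≠ b ∧
        f^[(a : ℕ)] i0 = f^[(b : ℕ)] i0 := by
      have hcard : Fintype.card N < Fintype.card (Fin (Fintype.card N + 1)) := by
        simp
      obtain ⟨a, b, hab, h⟩ := Fintype.exists_ne_map_eq_of_card_lt
        (fun m : Fin (Fintype.card N + 1) => f^[(m : ℕ)] i0) hcard
      exact ⟨a, b, hab, h⟩
    -- wlog a < b
    obtain ⟨a', b', hab', heq'⟩ : ∃ a' b' : ℕ, a' < b' ∧ f^[a'] i0 = f^[b'] i0 := by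
      rcases lt_or_gt_of_ne (fun h : (a : ℕ) = (b : ℕ) => hab (Fin.ext h)) with h | h
      · exact ⟨a, b, h, heqab⟩
      · exact ⟨b, a, h, heqab.symm⟩
    set i : N := f^[a'] i0 with hidef
    set n : ℕ := b' - a' with hndef
    have hn1 : 1 ≤ n := by omega
    have hcyc : f^[n] i = i := by
      rw [hidef, ← Function.iterate_add_apply, hndef]
      have : b' - a' + a' = b' := by omega
      rw [this, ← heq']
    set O : Finset N := (Finset.range n).image (fun m => f^[m] i) with hOdef
    have hiterO : ∀ m : ℕ, f^[m] i ∉ S := by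
      intro m
      rw [hidef, ← Function.iterate_add_apply]
      exact hiter _
    have hOT : ∀ j ∈ O, j ∉ S := by
      intro j hj
      simp only [hOdef, Finset.mem_image, Finset.mem_range] at hj
      obtain ⟨m, -, rfl⟩ := hj
      exact hiterO m
    have hiO : i ∈ O := by
      simp only [hOdef, Finset.mem_image, Finset.mem_range]
      exact ⟨0, by omega, rfl⟩
    have hsucc : ∀ m : ℕ, f^[m + 1] i = f (f^[m] i) := fun m =>
      Function.iterate_succ_apply' f m i
    have hfO : ∀ j ∈ O, f j ∈ O := by
      intro j hj
      simp only [hOdef, Finset.mem_image, Finset.mem_range] at hj ⊢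
      obtain ⟨m, hm, rfl⟩ := hj
      by_cases hmn : m + 1 < n
      · exact ⟨m + 1, hmn, hsucc m⟩
      · have hmn' : m + 1 = n := by omega
        refine ⟨0, by omega, ?_⟩
        rw [← hsucc m, hmn', hcyc, Function.iterate_zero_apply]
    have hOsurj : ∀ j ∈ O, ∃ j' ∈ O, f j' = j := by
      intro j hj
      simp only [hOdef, Finset.mem_image, Finset.mem_range] at hj
      obtain ⟨m, hm, rfl⟩ := hj
      by_cases hm0 : m = 0
      · refine ⟨f^[n - 1] i, ?_, ?_⟩
        · simp only [hOdef, Finset.mem_image, Finset.mem_range]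
          exact ⟨n - 1, by omega, rfl⟩
        · rw [← hsucc (n - 1)]
          have h1 : n - 1 + 1 = n := by omega
          rw [h1, hcyc, hm0, Function.iterate_zero_apply]
      · refine ⟨f^[m - 1] i, ?_, ?_⟩
        · simp only [hOdef, Finset.mem_image, Finset.mem_range]
          exact ⟨m - 1, by omega, rfl⟩
        · rw [← hsucc (m - 1)]
          congr 1
          omega
    have himgO : O.image f = O := by
      apply Finset.Subset.antisymm
      · intro j hj
        obtain ⟨j', hj', rfl⟩ := Finset.mem_image.mp hj
        exact hfO j' hj'
      · intro j hj
        obtain ⟨j', hj', hjj⟩ := hOsurj j hj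
        exact Finset.mem_image.mpr ⟨j', hj', hjj⟩
    have hinjO : Set.InjOn f ↑O :=
      Finset.injOn_of_card_image_eq (by rw [himgO])
    set σ : N → N := fun j => if j ∈ O then f j else j with hσdef
    have hσinj : Function.Injective σ := by
      intro a b hab
      simp only [hσdef] at hab
      by_cases ha : a ∈ O <;> by_cases hb : b ∈ O
      · rw [if_pos ha, if_pos hb] at hab
        exact hinjO ha hb hab
      · rw [if_pos ha, if_neg hb] at hab
        exact absurd (hab ▸ hfO a ha) hb
      · rw [if_neg ha, if_pos hb] at hab
        exact absurd (hab ▸ hfO b hb) ha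
      · rwa [if_neg ha, if_neg hb] at hab
    refine hx ⟨⟨x.1 ∘ σ, x.2.comp hσinj⟩, fun j => ?_, ⟨i, ?_⟩⟩
    · by_cases hj : j ∈ O
      · left
        simp only [Function.comp_apply, hσdef, if_pos hj]
        exact hfpref j (hOT j hj)
      · right
        simp [hσdef, hj]
    · simp only [Function.comp_apply, hσdef, if_pos hiO]
      exact hfpref i (hOT i hiO)
end

section
/- Let P be a private preference profile with N individuals. For every Pareto efficient allocation x ∈ PE(P) and every k ∈ {1, ..., N}, at most N − k + 1 individuals are allocated widgets weakly worse than their k-th favorite widget: #{i ∈ N : R(P_i, x_i) ≥ k} ≤ N − k + 1. -/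
/-- for a Pareto efficient allocation `x` and any
`k ∈ {1, ..., N}`, at most `N - k + 1` individuals are allocated widgets weakly
worse than their `k`-th favorite widget. -/
theorem stmt_12 {N M : Type*} [Fintype N] [Fintype M]
    (hNM : Fintype.card N ≤ Fintype.card M) (P : PrivProfile N M)
    (x : Alloc N M) (hx : x ∈ P.PE) (k : ℕ) (hk1 : 1 ≤ k)
    (hkN : k ≤ Fintype.card N) :
    {i : N | k ≤ P.rank i (x.1 i)}.ncard ≤ Fintype.card N - k + 1 := by
  classical
  by_contra hcon
  push_neg at hcon
  set S : Set N := {i : N | k ≤ P.rank i (x.1 i)} with hSdef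
  have hSN : S.ncard ≤ Fintype.card N := by
    have := Set.ncard_le_ncard (Set.subset_univ S) Set.finite_univ
    simpa [Set.ncard_univ, Nat.card_eq_fintype_card] using this
  -- Step A : every widget strictly preferred to one's assignment is assigned
  have hA : ∀ i w, P.pref i w (x.1 i) → w ∈ Set.range x.1 := by
    intro i w hw
    by_contra hwr
    apply hx
    refine ⟨⟨Function.update x.1 i w, ?_⟩, ?_, ⟨i, ?_⟩⟩
    · intro a b hab
      by_cases ha : a = i <;> by_cases hb : b = i
      · exact ha.trans hb.symm
      · exfalso; apply hwr
        rw [ha, Function.update_self, Function.update_of_ne hb] at hab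
        exact ⟨b, hab.symm⟩
      · exfalso; apply hwr
        rw [hb, Function.update_self, Function.update_of_ne ha] at hab
        exact ⟨a, hab⟩
      · rw [Function.update_of_ne ha, Function.update_of_ne hb] at hab
        exact x.2 hab
    · intro a
      by_cases ha : a = i
      · subst ha
        show P.wpref a (Function.update x.1 a w a) (x.1 a)
        rw [Function.update_self]; exact Or.inl hw
      · show P.wpref a (Function.update x.1 i w a) (x.1 a)
        rw [Function.update_of_ne ha]; exact Or.inr rfl
    · show P.pref i (Function.update x.1 i w i) (x.1 i)
      rw [Function.update_self]; exact hw
  -- Step B : each i ∈ S has a strictly better widget held by someone in S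
  have hB : ∀ i ∈ S, ∃ j ∈ S, P.pref i (x.1 j) (x.1 i) := by
    intro i hi
    by_contra hno
    push_neg at hno
    have hsub : {w | P.pref i w (x.1 i)} ⊆ x.1 '' Sᶜ := by
      intro w hw
      obtain ⟨j, hj⟩ := hA i w hw
      refine ⟨j, fun hjS => hno j hjS (by rw [hj]; exact hw), hj⟩
    have h1 : k - 1 ≤ {w | P.pref i w (x.1 i)}.ncard := by
      have hki : k ≤ P.rank i (x.1 i) := hi
      unfold PrivProfile.rank at hki
      omega
    have h3 : {w | P.pref i w (x.1 i)}.ncard ≤ (x.1 '' Sᶜ).ncard :=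
      Set.ncard_le_ncard hsub (Set.toFinite _)
    have h2 : (x.1 '' Sᶜ).ncard = Sᶜ.ncard := Set.ncard_image_of_injective _ x.2
    have h4 : S.ncard + Sᶜ.ncard = Fintype.card N := by
      rw [Set.ncard_add_ncard_compl S, Nat.card_eq_fintype_card]
    omega
  -- the successor function
  have hBc : ∀ i, ∃ j, i ∈ S → j ∈ S ∧ P.pref i (x.1 j) (x.1 i) := by
    intro i
    by_cases hi : i ∈ S
    · obtain ⟨j, hj1, hj2⟩ := hB i hi
      exact ⟨j, fun _ => ⟨hj1, hj2⟩⟩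
    · exact ⟨i, fun h => absurd h hi⟩
  choose f hf using hBc
  have hfS : ∀ i ∈ S, f i ∈ S := fun i hi => (hf i hi).1
  have hSne : S.Nonempty := by
    rw [← Set.ncard_pos]
    omega
  obtain ⟨i0, hi0⟩ := hSne
  have hiter : ∀ t, f^[t] i0 ∈ S := by
    intro t
    induction t with
    | zero => exact hi0
    | succ n ih => rw [Function.iterate_succ_apply']; exact hfS _ ih
  obtain ⟨a, b, hab, heq⟩ := Finite.exists_ne_map_eq_of_infinite (fun t : ℕ => f^[t] i0)
  wlog hlt : a < b generalizing a b
  · exact this b a hab.symm heq.symm (by omega)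
  set j : N := f^[a] i0 with hjdef
  set m : ℕ := b - a with hmdef
  have hm : 0 < m := by omega
  have hcyc : f^[m] j = j := by
    have : f^[m] (f^[a] i0) = f^[m + a] i0 := (Function.iterate_add_apply f m a i0).symm
    rw [hjdef, this]
    have hma : m + a = b := by omega
    rw [hma]
    exact heq.symm
  set C : Set N := Set.range (fun t : ℕ => f^[t] j) with hCdef
  have hjC : j ∈ C := ⟨0, rfl⟩
  have hCS : C ⊆ S := by
    rintro _ ⟨t, rfl⟩
    simp only
    have : f^[t] j = f^[t + a] i0 := by rw [hjdef, ← Function.iterate_add_apply]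
    rw [this]; exact hiter _
  have hmaps : Set.MapsTo f C C := by
    rintro _ ⟨t, rfl⟩
    exact ⟨t + 1, by simpa using Function.iterate_succ_apply' f t j⟩
  have hsurj : Set.SurjOn f C C := by
    rintro _ ⟨t, rfl⟩
    refine ⟨f^[t + m - 1] j, ⟨t + m - 1, rfl⟩, ?_⟩
    have h1 : f (f^[t + m - 1] j) = f^[t + m] j := by
      rw [← Function.iterate_succ_apply' f (t + m - 1) j]
      congr 1
      omega
    rw [h1, Function.iterate_add_apply, hcyc]
  have hinj : Set.InjOn f C :=
    (((Set.toFinite C).surjOn_iff_bijOn_of_mapsTo hmaps).mp hsurj).injOn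
  -- the improving permutation
  set σ : N → N := fun i => if i ∈ C then f i else i with hσdef
  have hσinj : Function.Injective σ := by
    intro p q hpq
    by_cases hp : p ∈ C <;> by_cases hq : q ∈ C <;>
      simp only [hσdef, if_pos, if_neg, hp, hq, if_true, if_false] at hpq
    · exact hinj hp hq hpq
    · exact absurd (hpq ▸ hmaps hp) hq
    · exact absurd (hpq ▸ hmaps hq) hp
    · exact hpq
  apply hx
  refine ⟨⟨x.1 ∘ σ, x.2.comp hσinj⟩, ?_, ⟨j, ?_⟩⟩
  · intro i
    by_cases hi : i ∈ C
    · have : σ i = f i := if_pos hi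
      simp only [Function.comp_apply, this]
      exact Or.inl (hf i (hCS hi)).2
    · have : σ i = i := if_neg hi
      simp only [Function.comp_apply, this]
      exact Or.inr rfl
  · have : σ j = f j := if_pos hjC
    simp only [Function.comp_apply, this]
    exact (hf j (hCS hjC)).2
end

section
/- Let P = (P_{i,i}, P_{i,-i})_{i∈N} be a lexicographic preference profile and P^ind := (P_{i,i}, P^ind_{i,-i})_{i∈N} the profile with the same private components and individualistic social components. Then P^ind ⊵ P, i.e., the individualistic profile is weakly more Pareto-favorable than P. -/
/-- `x_{-i}`: the restriction of an allocation `x` to `N \ {i}`. -/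
def restr {N M : Type*} (i : N) (x : Alloc N M) : {j : N // j ≠ i} → M :=
  fun j => x.1 j.1

/-- `X_{-i}`: the set of restrictions of admissible allocations to `N \ {i}`. -/
def Xminus (N M : Type*) (i : N) : Set ({j : N // j ≠ i} → M) :=
  {f | ∃ x : Alloc N M, f = restr i x}

/-- A lexicographic preference profile: each individual `i` has a private
component `priv i`, a strict linear order on the widgets `M`, and a social
component `soc i`, a total preorder on `X_{-i}`. -/
structure LexProfile (N M : Type*) where
  priv : N → M → M → Prop
  priv_irrefl : ∀ i x, ¬ priv i x x
  priv_trans : ∀ i x y z, priv i x y → priv i y z → priv i x z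
  priv_total : ∀ i x y, x ≠ y → priv i x y ∨ priv i y x
  soc : (i : N) → ({j : N // j ≠ i} → M) → ({j : N // j ≠ i} → M) → Prop
  soc_refl : ∀ i, ∀ f ∈ Xminus N M i, soc i f f
  soc_trans : ∀ i, ∀ f ∈ Xminus N M i, ∀ g ∈ Xminus N M i, ∀ h ∈ Xminus N M i,
    soc i f g → soc i g h → soc i f h
  soc_total : ∀ i, ∀ f ∈ Xminus N M i, ∀ g ∈ Xminus N M i, soc i f g ∨ soc i g f

namespace LexProfile

variable {N M : Type*}

/-- Strict part of the social component. -/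
def sSoc (P : LexProfile N M) (i : N) (f g : {j : N // j ≠ i} → M) : Prop :=
  P.soc i f g ∧ ¬ P.soc i g f

/-- Induced strict preference on allocations: `x ≻_{P_i} y` iff
`x_i ≻_{P_{i,i}} y_i`, or `x_i = y_i` and `x_{-i} ≻_{P_{i,-i}} y_{-i}`. -/
def sPref (P : LexProfile N M) (i : N) (x y : Alloc N M) : Prop :=
  P.priv i (x.1 i) (y.1 i) ∨ (x.1 i = y.1 i ∧ P.sSoc i (restr i x) (restr i y))

/-- Induced weak preference on allocations. -/
def wPref (P : LexProfile N M) (i : N) (x y : Alloc N M) : Prop :=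
  P.priv i (x.1 i) (y.1 i) ∨ (x.1 i = y.1 i ∧ P.soc i (restr i x) (restr i y))

/-- The ranking `R(P_i, x) = 1 + #{z ∈ X : z ≻_{P_i} x}`. -/
noncomputable def rank (P : LexProfile N M) (i : N) (x : Alloc N M) : ℕ :=
  1 + {z : Alloc N M | P.sPref i z x}.ncard

/-- The set of Pareto efficient allocations. -/
def PE (P : LexProfile N M) : Set (Alloc N M) :=
  {x | ¬ ∃ z : Alloc N M, (∀ i, P.wPref i z x) ∧ (∃ j, P.sPref j z x)}

/-- `P ⊵ P'`: there is a surjection `ψ` from `PE(P')` onto `PE(P)` weakly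
improving all ranking vectors. -/
def Dom (P P' : LexProfile N M) : Prop :=
  ∃ ψ : Alloc N M → Alloc N M, Set.MapsTo ψ P'.PE P.PE ∧ Set.SurjOn ψ P'.PE P.PE ∧
    ∀ x ∈ P'.PE, ∀ i, P.rank i (ψ x) ≤ P'.rank i x

/-- `P^ind`: the profile with the same private components as `P` and
individualistic social components (complete indifference over others' widgets). -/
def ind (P : LexProfile N M) : LexProfile N M where
  priv := P.priv
  priv_irrefl := P.priv_irrefl
  priv_trans := P.priv_trans
  priv_total := P.priv_total
  soc := fun _ _ _ => True
  soc_refl := by intros; trivial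
  soc_trans := by intros; trivial
  soc_total := by intros; left; trivial

end LexProfile


/-!
Under the individualistic profile an allocation is judged only by the widgets it hands out, so
Pareto dominance under `P` implies Pareto dominance under `P^ind`; hence `PE(P^ind) ⊆ PE(P)`,
and `P^ind` ranks every allocation at least as well as `P` does. Every allocation `x` is weakly
`P^ind`-dominated by some `z ∈ PE(P^ind)` (a weak dominator of `x` minimising the sum of the
`P^ind`-ranks), and `z` can only rank better than `x`. Sending `x` to such a `z` fixes
`PE(P^ind)` pointwise, which gives the surjection.
-/

namespace LexProfile

variable {N M : Type*} (P : LexProfile N M)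

theorem sPref_irrefl (i : N) (x : Alloc N M) : ¬ P.sPref i x x := by
  rintro (h | ⟨-, hs, hs'⟩)
  · exact P.priv_irrefl i _ h
  · exact hs' hs

theorem ind_sPref_iff {i : N} {z x : Alloc N M} :
    P.ind.sPref i z x ↔ P.priv i (z.1 i) (x.1 i) := by
  simp [sPref, sSoc, ind]

theorem ind_wPref_iff {i : N} {z x : Alloc N M} :
    P.ind.wPref i z x ↔ P.priv i (z.1 i) (x.1 i) ∨ z.1 i = x.1 i := by
  simp [wPref, ind]

theorem ind_wPref_of_wPref {i : N} {z x : Alloc N M} (h : P.wPref i z x) :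
    P.ind.wPref i z x :=
  P.ind_wPref_iff.2 (h.imp_right And.left)

theorem ind_sPref_of_wPref_of_ne {i : N} {z x : Alloc N M} (h : P.ind.wPref i z x)
    (hne : z.1 i ≠ x.1 i) : P.ind.sPref i z x :=
  P.ind_sPref_iff.2 ((P.ind_wPref_iff.1 h).resolve_right hne)

theorem ind_wPref_trans {i : N} {a b c : Alloc N M} (hab : P.ind.wPref i a b)
    (hbc : P.ind.wPref i b c) : P.ind.wPref i a c := by
  rw [ind_wPref_iff] at *
  rcases hab with hab | hab <;> rcases hbc with hbc | hbc
  · exact Or.inl (P.priv_trans i _ _ _ hab hbc)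
  · exact Or.inl (hbc ▸ hab)
  · exact Or.inl (hab ▸ hbc)
  · exact Or.inr (hab.trans hbc)

theorem ind_sPref_of_sPref_of_wPref {i : N} {a b c : Alloc N M} (hab : P.ind.sPref i a b)
    (hbc : P.ind.wPref i b c) : P.ind.sPref i a c := by
  rw [ind_sPref_iff] at *
  rcases P.ind_wPref_iff.1 hbc with hbc | hbc
  · exact P.priv_trans i _ _ _ hab hbc
  · exact hbc ▸ hab

theorem eq_of_mem_PE_ind {x z : Alloc N M} (hx : x ∈ P.ind.PE)
    (hz : ∀ i, P.ind.wPref i z x) : z = x := by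
  by_contra hne
  obtain ⟨k, hk⟩ : ∃ k, z.1 k ≠ x.1 k := by
    by_contra! h
    exact hne (Subtype.ext (funext h))
  exact hx ⟨z, hz, k, P.ind_sPref_of_wPref_of_ne (hz k) hk⟩

theorem PE_ind_subset : P.ind.PE ⊆ P.PE := by
  rintro x hx ⟨z, hzw, j, hzs⟩
  obtain rfl := P.eq_of_mem_PE_ind hx fun i => P.ind_wPref_of_wPref (hzw i)
  exact P.sPref_irrefl j z hzs

section Rank

variable [Finite N] [Finite M]

theorem ind_rank_le_rank (i : N) (x : Alloc N M) : P.ind.rank i x ≤ P.rank i x := by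
  refine Nat.add_le_add_left (Set.ncard_le_ncard (fun z hz => ?_) (Set.toFinite _)) 1
  exact Or.inl (P.ind_sPref_iff.1 hz)

theorem ind_rank_le_of_wPref {i : N} {z x : Alloc N M} (h : P.ind.wPref i z x) :
    P.ind.rank i z ≤ P.ind.rank i x :=
  Nat.add_le_add_left (Set.ncard_le_ncard
    (fun _ hw => P.ind_sPref_of_sPref_of_wPref hw h) (Set.toFinite _)) 1

theorem ind_rank_lt_of_sPref {i : N} {z x : Alloc N M} (h : P.ind.sPref i z x) :
    P.ind.rank i z < P.ind.rank i x := by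
  have hwz : P.ind.wPref i z x := P.ind_wPref_iff.2 (Or.inl (P.ind_sPref_iff.1 h))
  refine Nat.add_lt_add_left (Set.ncard_lt_ncard ⟨fun w hw => ?_, fun hsub => ?_⟩
    (Set.toFinite _)) 1
  · exact P.ind_sPref_of_sPref_of_wPref hw hwz
  · exact P.ind.sPref_irrefl i z (hsub h)

end Rank

theorem exists_mem_PE_ind_wPref [Fintype N] [Finite M] (x : Alloc N M) :
    ∃ z ∈ P.ind.PE, ∀ i, P.ind.wPref i z x := by
  obtain ⟨z, hzx, hmin⟩ := Set.exists_min_image {z | ∀ i, P.ind.wPref i z x}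
    (fun z => ∑ i, P.ind.rank i z) (Set.toFinite _)
    ⟨x, fun i => P.ind_wPref_iff.2 (Or.inr rfl)⟩
  refine ⟨z, ?_, hzx⟩
  rintro ⟨w, hwz, j, hwj⟩
  have hlt : ∑ i, P.ind.rank i w < ∑ i, P.ind.rank i z :=
    Finset.sum_lt_sum (fun i _ => P.ind_rank_le_of_wPref (hwz i))
      ⟨j, Finset.mem_univ j, P.ind_rank_lt_of_sPref hwj⟩
  exact (hmin w fun i => P.ind_wPref_trans (hwz i) (hzx i)).not_gt hlt

end LexProfile

theorem stmt_14_general {N M : Type*} [Fintype N] [Fintype M]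
    (P : LexProfile N M) :
    P.ind.Dom P := by
  choose ψ hψPE hψx using P.exists_mem_PE_ind_wPref
  refine ⟨ψ, fun x _ => hψPE x, fun y hy => ⟨y, P.PE_ind_subset hy, ?_⟩, fun x _ i => ?_⟩
  · exact P.eq_of_mem_PE_ind hy (hψx y)
  · exact (P.ind_rank_le_of_wPref (hψx x i)).trans (P.ind_rank_le_rank i x)

/-- the individualistic profile is weakly more Pareto-favorable:
`P^ind ⊵ P`. -/
theorem stmt_14 {N M : Type*} [Fintype N] [Fintype M]
    (hNM : Fintype.card N ≤ Fintype.card M) (P : LexProfile N M) :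
    P.ind.Dom P :=
  stmt_14_general P
end

section
/- Let P = (P_{i,i}, P_{i,-i})_{i∈N} be a lexicographic preference profile and P^ind := (P_{i,i}, P^ind_{i,-i})_{i∈N} the profile with the same private components and individualistic social components. If N ≥ 3 individuals, #PE(P) ≥ 2, and every social component P_{i,-i} is strict (for all distinct u, v ∈ X_{-i}, either u ≻_{P_{i,-i}} v or v ≻_{P_{i,-i}} u), then P^ind ⊳ P. -/
section Aux

open LexProfile

variable {N M : Type*}

lemma aux_restr_mem (i : N) (x : Alloc N M) : restr i x ∈ Xminus N M i := ⟨x, rfl⟩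

lemma aux_eq_of (i : N) {x y : Alloc N M} (h1 : x.1 i = y.1 i)
    (h2 : restr i x = restr i y) : x = y := by
  apply Subtype.ext; funext k
  by_cases hk : k = i
  · subst hk; exact h1
  · exact congrFun h2 ⟨k, hk⟩

variable (P : LexProfile N M)

lemma aux_priv_asymm (i : N) {a b : M} (h : P.priv i a b) : ¬ P.priv i b a :=
  fun h' => P.priv_irrefl i a (P.priv_trans i a b a h h')

lemma aux_sSoc_irrefl (i : N) (f : {j : N // j ≠ i} → M) : ¬ P.sSoc i f f :=
  fun h => h.2 h.1

lemma aux_sPref_irrefl (i : N) (x : Alloc N M) : ¬ P.sPref i x x := by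
  rintro (h | ⟨-, h⟩)
  · exact P.priv_irrefl i _ h
  · exact aux_sSoc_irrefl P i _ h

lemma aux_ind_sPref (i : N) (z x : Alloc N M) :
    P.ind.sPref i z x ↔ P.priv i (z.1 i) (x.1 i) := by
  simp [LexProfile.sPref, LexProfile.sSoc, LexProfile.ind]

lemma aux_ind_wPref (i : N) (z x : Alloc N M) :
    P.ind.wPref i z x ↔ (P.priv i (z.1 i) (x.1 i) ∨ z.1 i = x.1 i) := by
  simp [LexProfile.wPref, LexProfile.ind]

lemma aux_exists_ne {x y : Alloc N M} (h : x ≠ y) : ∃ i, x.1 i ≠ y.1 i := by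
  by_contra hc; push_neg at hc; exact h (Subtype.ext (funext hc))

/-- Strict domination for the individualistic profile. -/
def IndDom (z x : Alloc N M) : Prop :=
  (∀ i, P.priv i (z.1 i) (x.1 i) ∨ z.1 i = x.1 i) ∧ z ≠ x

/-- Strict Pareto domination for `P`. -/
def PDom (z x : Alloc N M) : Prop :=
  (∀ i, P.wPref i z x) ∧ z ≠ x

lemma aux_not_mem_PE_ind_iff (x : Alloc N M) :
    x ∉ P.ind.PE ↔ ∃ z, IndDom P z x := by
  unfold LexProfile.PE
  rw [Set.mem_setOf_eq, not_not]
  constructor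
  · rintro ⟨z, hall, j, hj⟩
    rw [aux_ind_sPref] at hj
    refine ⟨z, fun i => (aux_ind_wPref P i z x).mp (hall i), fun he => ?_⟩
    rw [he] at hj; exact P.priv_irrefl j _ hj
  · rintro ⟨z, hall, hne⟩
    obtain ⟨j, hj⟩ := aux_exists_ne hne
    refine ⟨z, fun i => (aux_ind_wPref P i z x).mpr (hall i), j, ?_⟩
    rw [aux_ind_sPref]
    exact (hall j).resolve_right hj

lemma aux_not_mem_PE_iff (x : Alloc N M) :
    x ∉ P.PE ↔ ∃ z, PDom P z x := by
  unfold LexProfile.PE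
  rw [Set.mem_setOf_eq, not_not]
  constructor
  · rintro ⟨z, hall, j, hj⟩
    refine ⟨z, hall, fun he => ?_⟩
    rw [he] at hj; exact aux_sPref_irrefl P j x hj
  · rintro ⟨z, hall, hne⟩
    obtain ⟨j, hj⟩ := aux_exists_ne hne
    refine ⟨z, hall, j, ?_⟩
    rcases hall j with h | ⟨he, -⟩
    · exact Or.inl h
    · exact absurd he hj

lemma aux_wPref_trans {i : N} {x y z : Alloc N M}
    (h1 : P.wPref i x y) (h2 : P.wPref i y z) : P.wPref i x z := by
  rcases h1 with h1 | ⟨e1, s1⟩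
  · rcases h2 with h2 | ⟨e2, s2⟩
    · exact Or.inl (P.priv_trans i _ _ _ h1 h2)
    · exact Or.inl (e2 ▸ h1)
  · rcases h2 with h2 | ⟨e2, s2⟩
    · exact Or.inl (e1 ▸ h2)
    · exact Or.inr ⟨e1.trans e2,
        P.soc_trans i _ (aux_restr_mem i x) _ (aux_restr_mem i y) _ (aux_restr_mem i z) s1 s2⟩

lemma aux_PDom_notboth {z x : Alloc N M} (h1 : PDom P z x) (h2 : PDom P x z) : False := by
  obtain ⟨j, hj⟩ := aux_exists_ne h1.2
  have p1 : P.priv j (z.1 j) (x.1 j) := by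
    rcases h1.1 j with h | ⟨he, -⟩
    · exact h
    · exact absurd he hj
  have p2 : P.priv j (x.1 j) (z.1 j) := by
    rcases h2.1 j with h | ⟨he, -⟩
    · exact h
    · exact absurd he (Ne.symm hj)
  exact aux_priv_asymm P j p1 p2

lemma aux_PDom_trans {x y z : Alloc N M} (h1 : PDom P x y) (h2 : PDom P y z) :
    PDom P x z := by
  refine ⟨fun i => aux_wPref_trans P (h1.1 i) (h2.1 i), fun he => ?_⟩
  exact aux_PDom_notboth P h1 (he ▸ h2)

lemma aux_IndDom_notboth {z x : Alloc N M} (h1 : IndDom P z x) (h2 : IndDom P x z) : False := by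
  obtain ⟨j, hj⟩ := aux_exists_ne h1.2
  exact aux_priv_asymm P j ((h1.1 j).resolve_right hj) ((h2.1 j).resolve_right (Ne.symm hj))

lemma aux_IndDom_trans {x y z : Alloc N M} (h1 : IndDom P x y) (h2 : IndDom P y z) :
    IndDom P x z := by
  refine ⟨fun i => ?_, fun he => aux_IndDom_notboth P h1 (he ▸ h2)⟩
  rcases h1.1 i with h | h
  · rcases h2.1 i with h' | h'
    · exact Or.inl (P.priv_trans i _ _ _ h h')
    · exact Or.inl (h' ▸ h)
  · rw [h]; exact h2.1 i

lemma aux_climb {α : Type*} [Finite α] (r : α → α → Prop) (hirr : ∀ a, ¬ r a a)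
    (htr : ∀ a b c, r a b → r b c → r a c) (S : Set α)
    (hS : ∀ z, z ∉ S → ∃ w, r w z) : ∀ z, ∃ w ∈ S, w = z ∨ r w z := by
  have it : IsTrans α r := ⟨htr⟩
  have ii : IsIrrefl α r := ⟨hirr⟩
  have hwf : WellFounded r := Finite.wellFounded_of_trans_of_irrefl r
  intro z
  refine hwf.induction (C := fun z => ∃ w ∈ S, w = z ∨ r w z) z ?_
  intro z IH
  by_cases hz : z ∈ S
  · exact ⟨z, hz, Or.inl rfl⟩
  · obtain ⟨w, hw⟩ := hS z hz
    obtain ⟨v, hv, hvw⟩ := IH w hw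
    exact ⟨v, hv, Or.inr (hvw.elim (fun h => h ▸ hw) (fun h => htr v w z h hw))⟩

lemma aux_PE_ind_subset : P.ind.PE ⊆ P.PE := by
  intro x hx
  rw [LexProfile.PE, Set.mem_setOf_eq]
  rintro ⟨z, hall, j, hj⟩
  have hne : z ≠ x := fun he => aux_sPref_irrefl P j x (he ▸ hj)
  refine (aux_not_mem_PE_ind_iff P x).mpr ⟨z, fun i => ?_, hne⟩ hx
  rcases hall i with h | ⟨he, -⟩
  · exact Or.inl h
  · exact Or.inr he

end Aux


section Aux2

open LexProfile

variable {N M : Type*} [Fintype N] [Fintype M] (P : LexProfile N M)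

lemma aux_ind_rank_eq (i : N) (x : Alloc N M) :
    P.ind.rank i x = 1 + {z : Alloc N M | P.priv i (z.1 i) (x.1 i)}.ncard := by
  have he : {z : Alloc N M | P.ind.sPref i z x} = {z : Alloc N M | P.priv i (z.1 i) (x.1 i)} :=
    Set.ext (fun z => aux_ind_sPref P i z x)
  rw [LexProfile.rank, he]

lemma aux_ind_rank_mono (i : N) {w x : Alloc N M}
    (h : P.priv i (w.1 i) (x.1 i) ∨ w.1 i = x.1 i) :
    P.ind.rank i w ≤ P.ind.rank i x := by
  rw [aux_ind_rank_eq, aux_ind_rank_eq]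
  refine Nat.add_le_add_left (Set.ncard_le_ncard ?_ (Set.toFinite _)) 1
  intro z hz
  rcases h with h | h
  · exact P.priv_trans i _ _ _ hz h
  · exact h ▸ hz

lemma aux_ind_rank_le (i : N) (x : Alloc N M) : P.ind.rank i x ≤ P.rank i x := by
  rw [aux_ind_rank_eq]
  unfold LexProfile.rank
  exact Nat.add_le_add_left (Set.ncard_le_ncard (fun z hz => Or.inl hz) (Set.toFinite _)) 1

lemma aux_key (i : N) {w x : Alloc N M} (h : P.rank i w ≤ P.ind.rank i x) :
    P.priv i (w.1 i) (x.1 i) ∨ w.1 i = x.1 i := by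
  by_contra hc
  push_neg at hc
  have hxw : P.priv i (x.1 i) (w.1 i) := (P.priv_total i _ _ hc.2).resolve_left hc.1
  set A := {z : Alloc N M | P.priv i (z.1 i) (x.1 i)} with hA
  set C := {z : Alloc N M | z.1 i = x.1 i} with hC
  have hsub : A ∪ C ⊆ {z : Alloc N M | P.sPref i z w} := by
    rintro z (hz | hz)
    · exact Or.inl (P.priv_trans i _ _ _ hz hxw)
    · exact Or.inl (hz ▸ hxw)
  have hdisj : Disjoint A C := by
    rw [Set.disjoint_left]
    intro z hz1 hz2
    have h1 : P.priv i (z.1 i) (x.1 i) := hz1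
    have h2 : z.1 i = x.1 i := hz2
    exact P.priv_irrefl i _ (h2 ▸ h1)
  have h1 : A.ncard + C.ncard ≤ {z : Alloc N M | P.sPref i z w}.ncard := by
    rw [← Set.ncard_union_eq hdisj (Set.toFinite _) (Set.toFinite _)]
    exact Set.ncard_le_ncard hsub (Set.toFinite _)
  have hCpos : 0 < C.ncard := by
    rw [Set.ncard_pos (Set.toFinite _)]
    exact ⟨x, rfl⟩
  rw [aux_ind_rank_eq, ← hA] at h
  unfold LexProfile.rank at h
  omega

lemma aux_key2 (i : N) {x : Alloc N M} (h : P.rank i x ≤ P.ind.rank i x) :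
    ∀ z : Alloc N M, z.1 i = x.1 i → ¬ P.sSoc i (restr i z) (restr i x) := by
  intro z hz hs
  set A := {u : Alloc N M | P.priv i (u.1 i) (x.1 i)} with hA
  set C := {u : Alloc N M | u.1 i = x.1 i ∧ P.sSoc i (restr i u) (restr i x)} with hC
  have hsub : A ∪ C ⊆ {u : Alloc N M | P.sPref i u x} := by
    rintro u (hu | hu)
    · exact Or.inl hu
    · exact Or.inr hu
  have hdisj : Disjoint A C := by
    rw [Set.disjoint_left]
    intro u hu1 hu2
    have h1 : P.priv i (u.1 i) (x.1 i) := hu1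
    have h2 : u.1 i = x.1 i := hu2.1
    exact P.priv_irrefl i _ (h2 ▸ h1)
  have h1 : A.ncard + C.ncard ≤ {u : Alloc N M | P.sPref i u x}.ncard := by
    rw [← Set.ncard_union_eq hdisj (Set.toFinite _) (Set.toFinite _)]
    exact Set.ncard_le_ncard hsub (Set.toFinite _)
  have hCpos : 0 < C.ncard := by
    rw [Set.ncard_pos (Set.toFinite _)]
    exact ⟨z, hz, hs⟩
  rw [aux_ind_rank_eq, ← hA] at h
  unfold LexProfile.rank at h
  omega

lemma aux_part1 : P.ind.Dom P := by
  classical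
  have climb := aux_climb (IndDom P) (fun a ha => ha.2 rfl)
    (fun a b c => aux_IndDom_trans P) P.ind.PE
    (fun z hz => (aux_not_mem_PE_ind_iff P z).mp hz)
  choose w hwPE hwdom using climb
  have hwd : ∀ x i, P.priv i ((w x).1 i) (x.1 i) ∨ (w x).1 i = x.1 i := by
    intro x i
    rcases hwdom x with h | h
    · rw [h]; exact Or.inr rfl
    · exact h.1 i
  refine ⟨fun x => if x ∈ P.ind.PE then x else w x, ?_, ?_, ?_⟩
  · intro x hx
    by_cases h : x ∈ P.ind.PE
    · simpa [h] using h
    · simpa [h] using hwPE x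
  · intro y hy
    exact ⟨y, aux_PE_ind_subset P hy, if_pos hy⟩
  · intro x hx i
    by_cases h : x ∈ P.ind.PE
    · simp only [if_pos h]
      exact aux_ind_rank_le P i x
    · simp only [if_neg h]
      exact (aux_ind_rank_mono P i (hwd x i)).trans (aux_ind_rank_le P i x)

end Aux2


section Aux3

open LexProfile

variable {N M : Type*} [Fintype N] [Fintype M] (P : LexProfile N M)

lemma aux_three (hN : 3 ≤ Fintype.card N) : ∃ a b c : N, a ≠ b ∧ a ≠ c ∧ b ≠ c := by
  obtain ⟨a, b, hab⟩ := Fintype.exists_pair_of_one_lt_card (α := N) (by omega)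
  classical
  have : ∃ c, c ≠ a ∧ c ≠ b := by
    by_contra h
    push_neg at h
    have hsub : (Finset.univ : Finset N) ⊆ {a, b} := by
      intro x _
      by_cases hx : x = a
      · simp [hx]
      · simp [h x hx]
    have h2 := Finset.card_le_card hsub
    have h3 : ({a, b} : Finset N).card ≤ 2 :=
      (Finset.card_insert_le a {b}).trans (by simp)
    rw [Finset.card_univ] at h2
    omega
  obtain ⟨c, hca, hcb⟩ := this
  exact ⟨a, b, c, hab, Ne.symm hca, Ne.symm hcb⟩

lemma aux_two_ne (hN : 3 ≤ Fintype.card N) (i : N) :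
    ∃ p q : N, p ≠ q ∧ p ≠ i ∧ q ≠ i := by
  obtain ⟨a, b, c, hab, hac, hbc⟩ := aux_three (N := N) hN
  by_cases ha : a = i
  · exact ⟨b, c, hbc, fun h => hab (h.trans ha.symm).symm, fun h => hac (h.trans ha.symm).symm⟩
  · by_cases hb : b = i
    · exact ⟨a, c, hac, ha, fun h => hbc (h.trans hb.symm).symm⟩
    · exact ⟨a, b, hab, ha, hb⟩

lemma aux_part2 (hN : 3 ≤ Fintype.card N) (hPE : 2 ≤ P.PE.ncard)
    (hstrict : ∀ i : N, ∀ f ∈ Xminus N M i, ∀ g ∈ Xminus N M i,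
      f ≠ g → P.sSoc i f g ∨ P.sSoc i g f) :
    ¬ P.Dom P.ind := by
  classical
  rintro ⟨φ, hmap, hsurj, hrank⟩
  -- φ is the identity on PE(P^ind)
  have hid : ∀ x ∈ P.ind.PE, φ x = x := by
    intro x hx
    have hcoord : ∀ i, P.priv i ((φ x).1 i) (x.1 i) ∨ (φ x).1 i = x.1 i :=
      fun i => aux_key P i (hrank x hx i)
    by_contra hne
    exact (aux_not_mem_PE_ind_iff P x).mpr ⟨φ x, hcoord, hne⟩ hx
  -- every PE(P^ind) element is a local soc-top for everyone
  have hLT : ∀ x ∈ P.ind.PE, ∀ i, ∀ z : Alloc N M, z.1 i = x.1 i →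
      ¬ P.sSoc i (restr i z) (restr i x) := by
    intro x hx i
    have h := hrank x hx i
    rw [hid x hx] at h
    exact aux_key2 P i h
  -- PE(P) = PE(P^ind)
  have hEq : P.PE = P.ind.PE := by
    apply Set.Subset.antisymm
    · intro y hy
      obtain ⟨x, hx, hxy⟩ := hsurj hy
      rw [hid x hx] at hxy
      rwa [← hxy]
    · exact aux_PE_ind_subset P
  -- distinct PE elements differ everywhere
  have hdiff : ∀ x ∈ P.PE, ∀ y ∈ P.PE, x ≠ y → ∀ i, x.1 i ≠ y.1 i := by
    intro x hx y hy hne i he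
    have hr : restr i x ≠ restr i y := fun h => hne (aux_eq_of i he h)
    rcases hstrict i _ (aux_restr_mem i x) _ (aux_restr_mem i y) hr with h | h
    · exact hLT y (hEq ▸ hy) i x he h
    · exact hLT x (hEq ▸ hx) i y he.symm h
  -- two distinct PE elements
  obtain ⟨a0, b0, ha0, hb0, hab0⟩ := (Set.one_lt_ncard_iff (s := P.PE) (Set.toFinite _)).mp (by omega)
  -- maximal elements
  have hmax : ∀ i : N, ∃ x ∈ P.PE, ∀ v ∈ P.PE, v ≠ x → P.priv i (x.1 i) (v.1 i) := by
    intro i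
    have it : IsTrans (Alloc N M) (fun a b => P.priv i (a.1 i) (b.1 i)) :=
      ⟨fun a b c h1 h2 => P.priv_trans i _ _ _ h1 h2⟩
    have ii : IsIrrefl (Alloc N M) (fun a b => P.priv i (a.1 i) (b.1 i)) :=
      ⟨fun a => P.priv_irrefl i _⟩
    have hwf : WellFounded (fun a b : Alloc N M => P.priv i (a.1 i) (b.1 i)) :=
      Finite.wellFounded_of_trans_of_irrefl _
    obtain ⟨m, hm, hmin⟩ := hwf.has_min P.PE ⟨a0, ha0⟩
    refine ⟨m, hm, fun v hv hne => ?_⟩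
    rcases P.priv_total i (m.1 i) (v.1 i) (fun h => hdiff m hm v hv (Ne.symm hne) i h) with h | h
    · exact h
    · exact absurd h (hmin v hv)
  -- the climbing lemma for P-domination
  have climb := aux_climb (PDom P) (fun a ha => ha.2 rfl)
    (fun a b c => aux_PDom_trans P) P.PE
    (fun z hz => (aux_not_mem_PE_iff P z).mp hz)
  -- Lemma L
  have hL : ∀ i : N, ∀ x ∈ P.PE, ∀ u ∈ P.PE, u ≠ x →
      (∀ v ∈ P.PE, v ≠ x → P.priv i (x.1 i) (v.1 i)) →
      ∀ k, k ≠ i → u.1 k ≠ x.1 i → P.priv k (x.1 k) (u.1 k) := by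
    intro i x hx u hu hux hmx k hk huk
    set z : Alloc N M := ⟨(Equiv.swap (x.1 i) (u.1 i)) ∘ u.1,
      (Equiv.injective _).comp u.2⟩ with hzdef
    have hzi : z.1 i = x.1 i := Equiv.swap_apply_right _ _
    have hzval : ∀ j, j ≠ i → u.1 j ≠ x.1 i → z.1 j = u.1 j := by
      intro j hj huj
      exact Equiv.swap_apply_of_ne_of_ne huj (fun h => hj (u.2 h))
    have hzx : z ≠ x := by
      obtain ⟨p, q, hpq, hpi, hqi⟩ := aux_two_ne (N := N) hN i
      have : ∃ j, j ≠ i ∧ u.1 j ≠ x.1 i := by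
        by_cases hp : u.1 p = x.1 i
        · refine ⟨q, hqi, fun hq => ?_⟩
          exact hpq (u.2 (hp.trans hq.symm))
        · exact ⟨p, hpi, hp⟩
      obtain ⟨j, hj, huj⟩ := this
      intro he
      have : z.1 j = u.1 j := hzval j hj huj
      rw [he] at this
      exact hdiff u hu x hx hux j (this.symm)
    have hznPE : z ∉ P.PE := by
      intro hz
      exact hdiff z hz x hx hzx i hzi
    obtain ⟨w, hwPE, hw⟩ := climb z
    have hPDom : PDom P w z := hw.resolve_left (fun h => hznPE (h ▸ hwPE))
    have hwx : w = x := by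
      rcases hPDom.1 i with h | ⟨he, -⟩
      · rw [hzi] at h
        by_cases hwx : w = x
        · exact hwx
        · exact absurd (hmx w hwPE hwx) (aux_priv_asymm P i h)
      · rw [hzi] at he
        by_contra hwx
        exact hdiff w hwPE x hx hwx i he
    have hzk : z.1 k = u.1 k := hzval k hk huk
    rcases (hwx ▸ hPDom.1 k) with h | ⟨he, -⟩
    · rwa [hzk] at h
    · rw [hzk] at he
      exact absurd he (hdiff x hx u hu (Ne.symm hux) k)
  -- the dagger fact
  have dag : ∀ i : N, ∀ x ∈ P.PE, (∀ v ∈ P.PE, v ≠ x → P.priv i (x.1 i) (v.1 i)) →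
      ∀ u ∈ P.PE, u ≠ x → ∀ k, P.priv k (u.1 k) (x.1 k) → u.1 k = x.1 i := by
    intro i x hx hmx u hu hne k hk
    by_cases hki : k = i
    · subst hki
      exact absurd hk (aux_priv_asymm P k (hmx u hu hne))
    · by_contra hc
      exact aux_priv_asymm P k (hL i x hx u hu hne hmx k hki hc) hk
  -- final contradiction
  obtain ⟨i1, i2, h12⟩ := Fintype.exists_pair_of_one_lt_card (show 1 < Fintype.card N by omega)
  obtain ⟨x1, hx1, hmax1⟩ := hmax i1
  obtain ⟨x2, hx2, hmax2⟩ := hmax i2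
  by_cases hxx : x1 = x2
  · -- same maximum x1 for both coordinates
    have hexu : ∃ u ∈ P.PE, u ≠ x1 := by
      by_cases h : a0 = x1
      · exact ⟨b0, hb0, fun hb => hab0 (h.trans hb.symm ▸ rfl)⟩
      · exact ⟨a0, ha0, h⟩
    obtain ⟨u, hu, hune⟩ := hexu
    have hbeat : ∃ k, P.priv k (u.1 k) (x1.1 k) := by
      by_contra hc
      push_neg at hc
      refine (aux_not_mem_PE_ind_iff P u).mpr ⟨x1, fun k => ?_, fun he => hune he.symm⟩ (hEq ▸ hu)
      have hk : x1.1 k ≠ u.1 k := hdiff x1 hx1 u hu (fun h => hune h.symm) k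
      rcases P.priv_total k (x1.1 k) (u.1 k) hk with h | h
      · exact Or.inl h
      · exact absurd h (hc k)
    obtain ⟨k, hk⟩ := hbeat
    have e1 : u.1 k = x1.1 i1 := dag i1 x1 hx1 hmax1 u hu hune k hk
    have e2 : u.1 k = x2.1 i2 := dag i2 x2 hx2 hmax2 u hu (hxx ▸ hune) k (by
      rw [← hxx]; exact hk)
    rw [e1, ← hxx] at e2
    exact h12 (x1.2 e2)
  · -- distinct maxima
    have hd12 : ∀ k, x1.1 k ≠ x2.1 k := hdiff x1 hx1 x2 hx2 hxx
    have key : ∀ k, x2.1 k = x1.1 i1 ∨ x1.1 k = x2.1 i2 := by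
      intro k
      rcases P.priv_total k (x1.1 k) (x2.1 k) (hd12 k) with h | h
      · exact Or.inr (dag i2 x2 hx2 hmax2 x1 hx1 hxx k h)
      · exact Or.inl (dag i1 x1 hx1 hmax1 x2 hx2 (Ne.symm hxx) k h)
    obtain ⟨a, b, c, hab, hac, hbc⟩ := aux_three (N := N) hN
    rcases key a with ha | ha <;> rcases key b with hb | hb <;> rcases key c with hc | hc
    · exact hab (x2.2 (ha.trans hb.symm))
    · exact hab (x2.2 (ha.trans hb.symm))
    · exact hac (x2.2 (ha.trans hc.symm))
    · exact hbc (x1.2 (hb.trans hc.symm))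
    · exact hbc (x2.2 (hb.trans hc.symm))
    · exact hac (x1.2 (ha.trans hc.symm))
    · exact hab (x1.2 (ha.trans hb.symm))
    · exact hab (x1.2 (ha.trans hb.symm))

end Aux3


/-- if there are at least 3 individuals, at least 2 Pareto
efficient allocations, and every social component is strict on `X_{-i}`, then
`P^ind ⊳ P`. -/
theorem stmt_16 {N M : Type*} [Fintype N] [Fintype M]
    (hNM : Fintype.card N ≤ Fintype.card M) (P : LexProfile N M)
    (hN : 3 ≤ Fintype.card N) (hPE : 2 ≤ P.PE.ncard)
    (hstrict : ∀ i : N, ∀ f ∈ Xminus N M i, ∀ g ∈ Xminus N M i,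
      f ≠ g → P.sSoc i f g ∨ P.sSoc i g f) :
    P.ind.Dom P ∧ ¬ P.Dom P.ind :=
  ⟨aux_part1 P, aux_part2 P hN hPE hstrict⟩
end
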